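/- arXiv:2202.06561 — 6 statements merged into one kernel-verified Lean document; each statement's English description precedes it below -/
import Mathlib

section
/- Let p be a supermodular set-function on a finite set S. If λ ≥ λ', then the smallest maximizer L(λ) of p(X) − λ|X| is contained in the smallest maximizer L(λ') of p(X) − λ'|X|. -/
open Finset

variable {α : Type*} [Fintype α] [DecidableEq α]

def Supermodular (p : Finset α → EReal) : Prop :=
  ∀ X Y : Finset α, p X + p Y ≤ p (X ∩ Y) + p (X ∪ Y)

/-- `X` maximizes `Z ↦ p(Z) − λ|Z|` over all subsets `Z` of the ground-set. -/
def IsMaximizer (p : Finset α → EReal) (lam : ℝ) (X : Finset α) : Prop :=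
  ∀ Y : Finset α,
    p Y - ((lam * (Y.card : ℝ) : ℝ) : EReal) ≤ p X - ((lam * (X.card : ℝ) : ℝ) : EReal)

/-- `L` is the smallest maximizer of `X ↦ p(X) − λ|X|`. -/
def IsSmallestMaximizer (p : Finset α → EReal) (lam : ℝ) (L : Finset α) : Prop :=
  IsMaximizer p lam L ∧ ∀ X : Finset α, IsMaximizer p lam X → L ⊆ X

/-! The smallest maximizers `L` of `f_λ(X) = p(X) − λ|X|` and `L'` of `f_λ'` satisfy, by
supermodularity of `p` and `λ' ≤ λ`,
`f_λ(L) + f_λ'(L') ≤ f_λ(L ∩ L') + f_λ'(L ∪ L')`, since `|L| − |L ∩ L'| = |L ∪ L'| − |L'|`.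
As `L'` maximizes `f_λ'`, the second summands may be cancelled, so `L ∩ L'` also maximizes
`f_λ`, and minimality of `L` gives `L ⊆ L ∩ L' ⊆ L'`. Cancelling in `EReal` needs
`f_λ'(L')` finite: it is at least `f_λ'(∅) = 0`, and if it is `⊤` then `p(L') = ⊤`, so `L'`
maximizes `f_λ` outright. -/

lemma EReal.le_of_add_le_add_of_le {a b c d : EReal} (h : a + d ≤ c + b) (hbd : b ≤ d)
    (hd_bot : d ≠ ⊥) (hd_top : d ≠ ⊤) : a ≤ c := by
  lift d to ℝ using ⟨hd_top, hd_bot⟩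
  exact (EReal.addLECancellable_coe d).add_le_add_iff_right.1 (h.trans (by gcongr))

section

variable {β : Type*}

noncomputable def penalized (p : Finset β → EReal) (lam : ℝ) (X : Finset β) : EReal :=
  p X - ((lam * (X.card : ℝ) : ℝ) : EReal)

lemma penalized_empty {p : Finset β → EReal} (hp0 : p ∅ = 0) (lam : ℝ) :
    penalized p lam ∅ = 0 := by
  simp [penalized, hp0]

lemma eq_top_of_penalized_eq_top {p : Finset β → EReal} {lam : ℝ} {X : Finset β}
    (h : penalized p lam X = ⊤) : p X = ⊤ := by
  rw [← EReal.sub_add_cancel (a := p X) (b := lam * X.card)]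
  exact h ▸ EReal.top_add_coe _

lemma isMaximizer_of_eq_top {p : Finset β → EReal} {X : Finset β} (h : p X = ⊤) (lam : ℝ) :
    IsMaximizer p lam X := fun Y => by
  rw [h, EReal.top_sub_coe]
  exact le_top

variable [DecidableEq β]

lemma card_penalty_le {lam lam' : ℝ} (h : lam' ≤ lam) (X Y : Finset β) :
    lam * (X ∩ Y).card + lam' * (X ∪ Y).card ≤ lam * X.card + lam' * Y.card := by
  have hcard : ((X ∩ Y).card : ℝ) + (X ∪ Y).card = X.card + Y.card := by
    exact_mod_cast card_inter_add_card_union X Y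
  have hY : (Y.card : ℝ) ≤ (X ∪ Y).card := by exact_mod_cast card_le_card subset_union_right
  linear_combination mul_nonneg (sub_nonneg.2 h) (sub_nonneg.2 hY) + lam * hcard

lemma Supermodular.penalized_add_le {p : Finset β → EReal} (hsup : Supermodular p)
    {lam lam' : ℝ} (h : lam' ≤ lam) (X Y : Finset β) :
    penalized p lam X + penalized p lam' Y ≤
      penalized p lam (X ∩ Y) + penalized p lam' (X ∪ Y) := by
  have regroup : ∀ (a b : EReal) (u v : ℝ), a - u + (b - v) = a + b + ((-(u + v) : ℝ) : EReal) :=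
    fun a b u v => by
      rw [sub_eq_add_neg, sub_eq_add_neg, add_add_add_comm, neg_add, EReal.coe_add,
        EReal.coe_neg, EReal.coe_neg]
  simp only [penalized, regroup]
  exact add_le_add (hsup X Y) <|
    EReal.coe_le_coe_iff.2 (by linarith [card_penalty_le h X Y])

end

theorem smallest_maximizer_monotone_general (p : Finset α → EReal) (hp0 : p ∅ = 0)
    (hsup : Supermodular p)
    (lam lam' : ℝ) (h : lam' ≤ lam) (L L' : Finset α)
    (hL : IsSmallestMaximizer p lam L) (hL' : IsSmallestMaximizer p lam' L') :
    L ⊆ L' := by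
  by_cases htop : penalized p lam' L' = ⊤
  · exact hL.2 L' (isMaximizer_of_eq_top (eq_top_of_penalized_eq_top htop) lam)
  have hbot : penalized p lam' L' ≠ ⊥ := by
    have h0 : penalized p lam' ∅ ≤ penalized p lam' L' := hL'.1 ∅
    rw [penalized_empty hp0] at h0
    exact ne_bot_of_le_ne_bot EReal.zero_ne_bot h0
  have hinter : IsMaximizer p lam (L ∩ L') := fun Y =>
    (hL.1 Y).trans <| EReal.le_of_add_le_add_of_le (hsup.penalized_add_le h L L')
      (hL'.1 (L ∪ L')) hbot htop
  exact (hL.2 _ hinter).trans inter_subset_right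

/-- If `λ ≥ λ'` then `L(λ) ⊆ L(λ')` for the smallest maximizers. -/
theorem smallest_maximizer_monotone (p : Finset α → EReal) (hp0 : p ∅ = 0)
    (hfin : p (Finset.univ : Finset α) ≠ ⊥) (hsup : Supermodular p)
    (lam lam' : ℝ) (h : lam' ≤ lam) (L L' : Finset α)
    (hL : IsSmallestMaximizer p lam L) (hL' : IsSmallestMaximizer p lam' L') :
    L ⊆ L' :=
  smallest_maximizer_monotone_general p hp0 hsup lam lam' h L L' hL hL'
end

section
/- The essential values β₁ > β₂ > ⋯ > β_q defined by the iterative contraction procedure form a strictly decreasing sequence of integers. That is, for each j ≥ 2, β_{j−1} > β_j, where β_j := max{⌈(p(X ∪ C_{j−1}) − p(C_{j−1}))/|X|⌉ : ∅ ≠ X ⊆ S − C_{j−1}}, C_j := C_{j−1} ∪ S_j, and S_j is the smallest subset of S − C_{j−1} maximizing X ↦ p(X ∪ C_{j−1}) − (β_j − 1)|X| − p(C_{j−1}). -/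
/-!
A set `X` outside `C_{j-1}` can be merged with `S_{j-1}` into a competitor of the maximization
that selected `S_{j-1}`. Comparing the two bounds the gain `p(X ∪ C_{j-1}) − p(C_{j-1})` by
`(β_{j-1} − 1)|X|`, whereas the set attaining `β_j` gains strictly more than `(β_j − 1)|X|`.
-/

open Finset

variable {α : Type*} [Fintype α] [DecidableEq α]

/-- `p` takes values in `ℤ ∪ {−∞}`. -/
def IntegerValued (p : Finset α → EReal) : Prop :=
  ∀ X : Finset α, p X = ⊥ ∨ ∃ n : ℤ, p X = ((n : ℝ) : EReal)

/-- The data of the iterative contraction procedure defining the essential values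
`β j`, the sets `S_j = Sj j` and the canonical chain `C j` (for `1 ≤ j ≤ q`):
`β j` is the maximum of `⌈(p(X ∪ C_{j−1}) − p(C_{j−1}))/|X|⌉` over nonempty
`X ⊆ S − C_{j−1}`; `Sj j` is the smallest subset of `S − C_{j−1}` maximizing
`h_j(X) = p(X ∪ C_{j−1}) − (β_j − 1)|X| − p(C_{j−1})`; and `C j = C (j−1) ∪ Sj j`. -/
structure CanonicalData (p : Finset α → EReal) (q : ℕ) (β : ℕ → ℤ)
    (C Sj : ℕ → Finset α) : Prop where
  hC0 : C 0 = ∅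
  hCq : C q = Finset.univ
  hCne : ∀ j, 1 ≤ j → j ≤ q → C (j - 1) ≠ Finset.univ
  /-- `β j` is an upper bound for the ceilings: `p(X ∪ C_{j−1}) − p(C_{j−1}) ≤ β_j |X|`. -/
  hβub : ∀ j, 1 ≤ j → j ≤ q → ∀ X : Finset α, X ⊆ Finset.univ \ C (j - 1) → X.Nonempty →
    p (X ∪ C (j - 1)) ≤ p (C (j - 1)) + (((β j * (X.card : ℤ) : ℤ) : ℝ) : EReal)
  /-- `β j` is attained: some nonempty `X` has `p(X ∪ C_{j−1}) − p(C_{j−1}) > (β_j−1)|X|`. -/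
  hβattain : ∀ j, 1 ≤ j → j ≤ q → ∃ X : Finset α, X ⊆ Finset.univ \ C (j - 1) ∧ X.Nonempty ∧
    p (C (j - 1)) + ((((β j - 1) * (X.card : ℤ) : ℤ) : ℝ) : EReal) < p (X ∪ C (j - 1))
  hSsub : ∀ j, 1 ≤ j → j ≤ q → Sj j ⊆ Finset.univ \ C (j - 1)
  /-- `Sj j` maximizes `h_j` over subsets of `S − C_{j−1}`. -/
  hSmax : ∀ j, 1 ≤ j → j ≤ q → ∀ X : Finset α, X ⊆ Finset.univ \ C (j - 1) →
    p (X ∪ C (j - 1)) - ((((β j - 1) * (X.card : ℤ) : ℤ) : ℝ) : EReal) ≤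
      p (Sj j ∪ C (j - 1)) - ((((β j - 1) * ((Sj j).card : ℤ) : ℤ) : ℝ) : EReal)
  /-- `Sj j` is the smallest such maximizer. -/
  hSmin : ∀ j, 1 ≤ j → j ≤ q → ∀ X : Finset α, X ⊆ Finset.univ \ C (j - 1) →
    p (X ∪ C (j - 1)) - ((((β j - 1) * (X.card : ℤ) : ℤ) : ℝ) : EReal) =
      p (Sj j ∪ C (j - 1)) - ((((β j - 1) * ((Sj j).card : ℤ) : ℤ) : ℝ) : EReal) →
    Sj j ⊆ X
  hCj : ∀ j, 1 ≤ j → j ≤ q → C j = C (j - 1) ∪ Sj j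

theorem EReal.lt_of_add_lt_add_left_coe {a : EReal} {s t : ℝ} (h : a + s < a + t) : s < t := by
  induction a using EReal.rec with
  | bot => simp at h
  | top => simp at h
  | coe a => exact_mod_cast lt_of_add_lt_add_left (α := ℝ) (by exact_mod_cast h)

namespace CanonicalData

variable {p : Finset α → EReal} {q : ℕ} {β : ℕ → ℤ} {C Sj : ℕ → Finset α}

theorem apply_union_le (hdata : CanonicalData p q β C Sj) {k : ℕ} (hk : 1 ≤ k) (hkq : k ≤ q)
    {X : Finset α} (hX : X ⊆ Finset.univ \ C k) :
    p (X ∪ C k) ≤ p (C k) + ((((β k - 1) * (X.card : ℤ) : ℤ) : ℝ) : EReal) := by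
  have hCk := hdata.hCj k hk hkq
  have hdisj : Disjoint X (Sj k) :=
    (Finset.subset_sdiff.mp hX).2.mono_right (hCk ▸ Finset.subset_union_right)
  have hXS : X ∪ Sj k ⊆ Finset.univ \ C (k - 1) :=
    Finset.union_subset (hX.trans (Finset.sdiff_subset_sdiff le_rfl
      (hCk ▸ Finset.subset_union_left))) (hdata.hSsub k hk hkq)
  have hmax := hdata.hSmax k hk hkq (X ∪ Sj k) hXS
  rw [Finset.card_union_of_disjoint hdisj, Finset.union_assoc, Finset.union_comm (Sj k),
    ← hCk] at hmax
  calc p (X ∪ C k)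
      ≤ p (C k) - ((((β k - 1) * ((Sj k).card : ℤ) : ℤ) : ℝ) : EReal)
          + ((((β k - 1) * ((X.card + (Sj k).card : ℕ) : ℤ) : ℤ) : ℝ) : EReal) :=
        (EReal.sub_le_iff_le_add (.inl (EReal.coe_ne_bot _)) (.inl (EReal.coe_ne_top _))).1 hmax
    _ = p (C k) + ((((β k - 1) * (X.card : ℤ) : ℤ) : ℝ) : EReal) := by
        rw [sub_eq_add_neg, add_assoc, ← EReal.coe_neg, ← EReal.coe_add]
        congr 2
        push_cast
        ring

end CanonicalData

theorem essential_values_strictly_decreasing_general (p : Finset α → EReal) (q : ℕ) (β : ℕ → ℤ)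
    (C Sj : ℕ → Finset α) (hdata : CanonicalData p q β C Sj) :
    ∀ j, 2 ≤ j → j ≤ q → β j < β (j - 1) := by
  intro j hj hjq
  obtain ⟨X, hX, -, hgain⟩ := hdata.hβattain j (by omega) hjq
  have hbound := hdata.apply_union_le (k := j - 1) (by omega) (by omega) hX
  have hgap : (β j - 1) * (X.card : ℤ) < (β (j - 1) - 1) * X.card := by
    exact_mod_cast EReal.lt_of_add_lt_add_left_coe (hgain.trans_le hbound)
  linarith [lt_of_mul_lt_mul_right hgap (Nat.cast_nonneg _)]

/-- The essential values form a strictly decreasing sequence: `β_{j−1} > β_j`. -/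
theorem essential_values_strictly_decreasing (p : Finset α → EReal) (hp0 : p ∅ = 0)
    (hfin : p (Finset.univ : Finset α) ≠ ⊥) (hsup : Supermodular p)
    (hint : IntegerValued p) (q : ℕ) (β : ℕ → ℤ) (C Sj : ℕ → Finset α)
    (hdata : CanonicalData p q β C Sj) :
    ∀ j, 2 ≤ j → j ≤ q → β j < β (j - 1) :=
  essential_values_strictly_decreasing_general p q β C Sj hdata
end

section
/- With the notation of the canonical partition construction, for each j with 1 ≤ j ≤ q, the set C_j (defined iteratively as the smallest maximizer of p(X) − (β_j−1)|X| among all X containing C_{j−1}) is in fact the smallest maximizer of p(X) − (β_j−1)|X| among all subsets X of S, i.e., C_j = L(β_j − 1). -/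
open Finset

variable {α : Type*} [Fintype α] [DecidableEq α]

/-! Induct on `j`, writing `D = C_{j-1}` and `λ = β_j - 1`. For `j ≥ 2` the induction hypothesis
gives `D = L(μ)` with `μ = β_{j-1} - 1`, and `λ < μ` because `β_j` is attained by a set disjoint
from `D`. Supermodularity shows that adding the `μ`-maximizer `D` to any set `Y` gains at least
`μ` per new element; as `λ ≤ μ`, this gives `p(Y) - λ|Y| ≤ p(Y ∪ D) - λ|Y ∪ D|`, and as `λ < μ`,
every `λ`-maximizer contains `D`. So the smallest maximizer among the supersets of `D`, which is
`C_j`, is the smallest maximizer overall. -/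

lemma EReal.sub_coe_add_le_sub_coe_add_iff (x y : EReal) (a b c : ℝ) :
    x - ((a + c : ℝ) : EReal) ≤ y - ((b + c : ℝ) : EReal) ↔ x - a ≤ y - b := by
  have hsplit : ∀ (z : EReal) (d : ℝ), z - ((d + c : ℝ) : EReal) = z - d + ((-c : ℝ) : EReal) := by
    intro z d
    rw [sub_eq_add_neg, sub_eq_add_neg, add_assoc, ← EReal.coe_neg, ← EReal.coe_neg,
      ← EReal.coe_add]
    congr 2
    ring
  rw [hsplit, hsplit, (EReal.addLECancellable_coe _).add_le_add_iff_right]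

section

variable {S : Type*} {p : Finset S → EReal}

lemma IntegerValued.ne_top (hint : IntegerValued p) (X : Finset S) : p X ≠ ⊤ := by
  rcases hint X with h | ⟨n, h⟩ <;> simp [h]

lemma IsMaximizer.ne_bot (hp0 : p ∅ = 0) {lam : ℝ} {A : Finset S} (hA : IsMaximizer p lam A) :
    p A ≠ ⊥ := by
  intro h
  simpa [hp0, h] using hA ∅

lemma IsMaximizer.add_card_sdiff_le [DecidableEq S] (hp0 : p ∅ = 0) (hsup : Supermodular p)
    (htop : ∀ X, p X ≠ ⊤) {mu : ℝ} {D : Finset S} (hD : IsMaximizer p mu D) (Y : Finset S) :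
    p Y + ((mu * #(D \ Y) : ℝ) : EReal) ≤ p (Y ∪ D) := by
  by_cases hY : p Y = ⊥
  · simp [hY]
  have hDbot := hD.ne_bot hp0
  have hYD := hsup Y D
  obtain ⟨hcap, hcup⟩ :=
    EReal.add_ne_bot_iff.1 (ne_bot_of_le_ne_bot (EReal.add_ne_bot_iff.2 ⟨hY, hDbot⟩) hYD)
  have hmax := hD (Y ∩ D)
  have hcard := card_sdiff_add_card_inter D Y
  rw [inter_comm] at hmax hYD
  lift p Y to ℝ using ⟨htop Y, hY⟩ with y
  lift p D to ℝ using ⟨htop D, hDbot⟩ with d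
  lift p (D ∩ Y) to ℝ using ⟨htop _, by rwa [inter_comm]⟩ with c
  lift p (Y ∪ D) to ℝ using ⟨htop _, hcup⟩ with u
  norm_cast at *
  rw [← hcard] at hmax
  push_cast at hmax
  linarith

lemma IsMaximizer.sub_card_le_union [DecidableEq S] (hp0 : p ∅ = 0) (hsup : Supermodular p)
    (htop : ∀ X, p X ≠ ⊤) {lam mu : ℝ} (hlm : lam ≤ mu) {D : Finset S} (hD : IsMaximizer p mu D)
    (Y : Finset S) :
    p Y - ((lam * #Y : ℝ) : EReal) ≤ p (Y ∪ D) - ((lam * #(Y ∪ D) : ℝ) : EReal) := by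
  by_cases hY : p Y = ⊥
  · simp [hY]
  have hgain := hD.add_card_sdiff_le hp0 hsup htop Y
  have hcup : p (Y ∪ D) ≠ ⊥ :=
    ne_bot_of_le_ne_bot (EReal.add_ne_bot_iff.2 ⟨hY, EReal.coe_ne_bot _⟩) hgain
  have hcard : #(D \ Y) + #Y = #(Y ∪ D) := by rw [card_sdiff_add_card, union_comm]
  have hsdiff : (0 : ℝ) ≤ #(D \ Y) := Nat.cast_nonneg _
  lift p Y to ℝ using ⟨htop Y, hY⟩ with y
  lift p (Y ∪ D) to ℝ using ⟨htop _, hcup⟩ with u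
  norm_cast at *
  rw [← hcard]
  push_cast
  nlinarith

lemma IsMaximizer.subset_of_lt [DecidableEq S] (hp0 : p ∅ = 0) (hsup : Supermodular p)
    (htop : ∀ X, p X ≠ ⊤) {lam mu : ℝ} (hlm : lam < mu) {A B : Finset S}
    (hA : IsMaximizer p mu A) (hB : IsMaximizer p lam B) : A ⊆ B := by
  have hgain := hA.add_card_sdiff_le hp0 hsup htop B
  have hmax := hB (B ∪ A)
  have hBbot := hB.ne_bot hp0
  have hcup : p (B ∪ A) ≠ ⊥ :=
    ne_bot_of_le_ne_bot (EReal.add_ne_bot_iff.2 ⟨hBbot, EReal.coe_ne_bot _⟩) hgain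
  have hcard : #(A \ B) + #B = #(B ∪ A) := by rw [card_sdiff_add_card, union_comm]
  lift p B to ℝ using ⟨htop B, hBbot⟩ with b
  lift p (B ∪ A) to ℝ using ⟨htop _, hcup⟩ with u
  norm_cast at *
  rw [← hcard] at hmax
  push_cast at hmax
  have hzero : (#(A \ B) : ℝ) ≤ 0 := by nlinarith
  rw [← sdiff_eq_empty_iff_subset, ← card_eq_zero]
  exact_mod_cast hzero.antisymm (Nat.cast_nonneg _)

lemma IsMaximizer.lt_of_add_lt [DecidableEq S] (hp0 : p ∅ = 0) (htop : ∀ X, p X ≠ ⊤)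
    {lam mu : ℝ} {D X : Finset S} (hD : IsMaximizer p mu D) (hX : X.Nonempty) (hXD : Disjoint X D)
    (hlt : p D + ((lam * #X : ℝ) : EReal) < p (X ∪ D)) : lam < mu := by
  have hmax := hD (X ∪ D)
  have hDbot := hD.ne_bot hp0
  have hcard := card_union_of_disjoint hXD
  have hXpos : (0 : ℝ) < #X := by exact_mod_cast hX.card_pos
  lift p D to ℝ using ⟨htop D, hDbot⟩ with d
  lift p (X ∪ D) to ℝ using ⟨htop _, ne_bot_of_gt hlt⟩ with u
  norm_cast at *
  rw [hcard] at hmax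
  push_cast at hmax
  nlinarith

lemma sub_card_union_le_iff [DecidableEq S] (lam : ℝ) {D X Y : Finset S} (hX : Disjoint X D)
    (hY : Disjoint Y D) :
    p (X ∪ D) - ((lam * #(X ∪ D) : ℝ) : EReal) ≤ p (Y ∪ D) - ((lam * #(Y ∪ D) : ℝ) : EReal) ↔
      p (X ∪ D) - ((lam * #X : ℝ) : EReal) ≤ p (Y ∪ D) - ((lam * #Y : ℝ) : EReal) := by
  rw [card_union_of_disjoint hX, card_union_of_disjoint hY, Nat.cast_add, Nat.cast_add, mul_add,
    mul_add, EReal.sub_coe_add_le_sub_coe_add_iff]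

def IsMaximizerAbove (p : Finset S → EReal) (lam : ℝ) (D X : Finset S) : Prop :=
  D ⊆ X ∧ ∀ Y, D ⊆ Y → p Y - ((lam * #Y : ℝ) : EReal) ≤ p X - ((lam * #X : ℝ) : EReal)

def IsLeastMaximizerAbove (p : Finset S → EReal) (lam : ℝ) (D X : Finset S) : Prop :=
  IsMaximizerAbove p lam D X ∧ ∀ Y, IsMaximizerAbove p lam D Y → X ⊆ Y

/-- `IsLeastMaximizer p λ X` says that `X = L(λ)`. -/
def IsLeastMaximizer (p : Finset S → EReal) (lam : ℝ) (X : Finset S) : Prop :=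
  IsMaximizer p lam X ∧ ∀ Y, IsMaximizer p lam Y → X ⊆ Y

lemma IsLeastMaximizerAbove.isLeastMaximizer [DecidableEq S] {lam : ℝ} {D X : Finset S}
    (hX : IsLeastMaximizerAbove p lam D X)
    (hgain : ∀ Y, p Y - ((lam * #Y : ℝ) : EReal) ≤ p (Y ∪ D) - ((lam * #(Y ∪ D) : ℝ) : EReal))
    (hD : ∀ Y, IsMaximizer p lam Y → D ⊆ Y) : IsLeastMaximizer p lam X :=
  ⟨fun Y => (hgain Y).trans (hX.1.2 _ subset_union_right),
    fun Y hY => hX.2 Y ⟨hD Y hY, fun Z _ => hY Z⟩⟩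

end

namespace CanonicalData

variable {S : Type*} [Fintype S] [DecidableEq S] {p : Finset S → EReal} {q : ℕ} {β : ℕ → ℤ}
  {C Sj : ℕ → Finset S}

lemma isLeastMaximizerAbove_succ (hdata : CanonicalData p q β C Sj) {j : ℕ} (hj : j < q) :
    IsLeastMaximizerAbove p ((β (j + 1) : ℝ) - 1) (C j) (C (j + 1)) := by
  have hsub := hdata.hSsub (j + 1) (by omega) hj
  have hmax := hdata.hSmax (j + 1) (by omega) hj
  have hmin := hdata.hSmin (j + 1) (by omega) hj
  rw [hdata.hCj (j + 1) (by omega) hj]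
  simp only [Nat.add_sub_cancel, Int.cast_mul, Int.cast_sub, Int.cast_one, Int.cast_natCast]
    at hsub hmax hmin ⊢
  have hSC : Disjoint (Sj (j + 1)) (C j) := disjoint_of_subset_left hsub sdiff_disjoint
  have hcompl : ∀ Y, Y \ C j ⊆ univ \ C j := fun Y => sdiff_subset_sdiff (subset_univ Y) subset_rfl
  have hAbove : IsMaximizerAbove p ((β (j + 1) : ℝ) - 1) (C j) (C j ∪ Sj (j + 1)) := by
    refine ⟨subset_union_left, fun Y hY => ?_⟩
    rw [← sdiff_union_of_subset hY, union_comm (C j), sub_card_union_le_iff _ sdiff_disjoint hSC]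
    exact hmax _ (hcompl Y)
  refine ⟨hAbove, fun Y hY => ?_⟩
  have hSY : Sj (j + 1) ⊆ Y \ C j := by
    refine hmin _ (hcompl Y) (le_antisymm (hmax _ (hcompl Y)) ?_)
    rw [← sub_card_union_le_iff _ hSC sdiff_disjoint, sdiff_union_of_subset hY.1, union_comm]
    exact hY.2 _ subset_union_left
  exact union_subset hY.1 (hSY.trans sdiff_subset)

lemma beta_succ_lt (hdata : CanonicalData p q β C Sj) (hp0 : p ∅ = 0) (htop : ∀ X, p X ≠ ⊤)
    {j : ℕ} (hj : j < q) (hC : IsMaximizer p ((β j : ℝ) - 1) (C j)) : β (j + 1) < β j := by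
  obtain ⟨X, hXsub, hXne, hXlt⟩ := hdata.hβattain (j + 1) (by omega) hj
  simp only [Nat.add_sub_cancel, Int.cast_mul, Int.cast_sub, Int.cast_one, Int.cast_natCast]
    at hXsub hXlt
  have := hC.lt_of_add_lt hp0 htop hXne (disjoint_of_subset_left hXsub sdiff_disjoint) hXlt
  exact_mod_cast (sub_lt_sub_iff_right 1).1 this

lemma isLeastMaximizer_succ (hdata : CanonicalData p q β C Sj) (hp0 : p ∅ = 0)
    (hsup : Supermodular p) (htop : ∀ X, p X ≠ ⊤) :
    ∀ j, j < q → IsLeastMaximizer p ((β (j + 1) : ℝ) - 1) (C (j + 1))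
  | 0, hq => (hdata.isLeastMaximizerAbove_succ hq).isLeastMaximizer
      (by simp [hdata.hC0]) (by simp [hdata.hC0])
  | j + 1, hq => by
    have hC := isLeastMaximizer_succ hdata hp0 hsup htop j (by omega)
    have hlt : (β (j + 2) : ℝ) - 1 < (β (j + 1) : ℝ) - 1 := by
      exact_mod_cast sub_lt_sub_right (hdata.beta_succ_lt hp0 htop hq hC.1) 1
    exact (hdata.isLeastMaximizerAbove_succ hq).isLeastMaximizer
      (hC.1.sub_card_le_union hp0 hsup htop hlt.le)
      fun _ hY => hC.1.subset_of_lt hp0 hsup htop hlt hY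

end CanonicalData

theorem canonical_chain_is_global_smallest_maximizer_general (p : Finset α → EReal) (hp0 : p ∅ = 0)
    (hsup : Supermodular p) (hint : IntegerValued p) (q : ℕ) (β : ℕ → ℤ) (C Sj : ℕ → Finset α)
    (hdata : CanonicalData p q β C Sj) :
    ∀ j, 1 ≤ j → j ≤ q →
      IsMaximizer p ((β j : ℝ) - 1) (C j) ∧
      ∀ X : Finset α, IsMaximizer p ((β j : ℝ) - 1) X → C j ⊆ X := by
  intro j hj hjq
  obtain ⟨i, rfl⟩ := Nat.exists_eq_add_of_le' hj
  exact hdata.isLeastMaximizer_succ hp0 hsup hint.ne_top i hjq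

/-- Each `C j` of the canonical chain is in fact the smallest maximizer of
`X ↦ p(X) − (β_j − 1)|X|` among all subsets `X` of `S`, i.e. `C j = L(β_j − 1)`. -/
theorem canonical_chain_is_global_smallest_maximizer (p : Finset α → EReal) (hp0 : p ∅ = 0)
    (hfin : p (Finset.univ : Finset α) ≠ ⊥) (hsup : Supermodular p)
    (hint : IntegerValued p) (q : ℕ) (β : ℕ → ℤ) (C Sj : ℕ → Finset α)
    (hdata : CanonicalData p q β C Sj) :
    ∀ j, 1 ≤ j → j ≤ q →
      IsMaximizer p ((β j : ℝ) - 1) (C j) ∧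
      ∀ X : Finset α, IsMaximizer p ((β j : ℝ) - 1) X → C j ⊆ X :=
  canonical_chain_is_global_smallest_maximizer_general p hp0 hsup hint q β C Sj hdata
end

section
/- An integer β is an essential value of the integer-valued supermodular function p if and only if L(β) ≠ L(β − 1), where L(β) is the smallest maximizer of p(X) − β|X| over subsets of S. Moreover L(β_j − 1) = L(β_{j+1}) for consecutive essential values β_j > β_{j+1}, and L(β₁) = ∅, L(β_q − 1) = S. -/
set_option linter.unusedSectionVars false
set_option maxHeartbeats 1000000


open Finset

variable {α : Type*} [Fintype α] [DecidableEq α]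

/-- `L` assigns to each real `λ` the smallest maximizer of `X ↦ p(X) − λ|X|`. -/
def SmallestMaximizerFun (p : Finset α → EReal) (L : ℝ → Finset α) : Prop :=
  ∀ lam : ℝ, IsMaximizer p lam (L lam) ∧ ∀ X : Finset α, IsMaximizer p lam X → L lam ⊆ X

lemma coe_mul_card (m : ℤ) (n : ℕ) :
    ((((m : ℝ)) * (n : ℝ) : ℝ) : EReal) = (((m * (n : ℤ) : ℤ) : ℝ) : EReal) := by
  norm_cast

section Aux
variable {p : Finset α → EReal} {q : ℕ} {β : ℕ → ℤ} {C Sj : ℕ → Finset α}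

lemma getInt (hint : IntegerValued p) {X : Finset α} (h : p X ≠ ⊥) :
    ∃ n : ℤ, p X = ((n : ℝ) : EReal) := (hint X).resolve_left h

lemma sub_coe_ne_bot {x : EReal} (h : x ≠ ⊥) (r : ℝ) : x - (r : EReal) ≠ ⊥ := by
  rw [sub_eq_add_neg, Ne, EReal.add_eq_bot_iff]
  push_neg
  exact ⟨h, by simp [← EReal.coe_neg]⟩

lemma inter_union_ne_bot (hsup : Supermodular p) {X Y : Finset α}
    (hX : p X ≠ ⊥) (hY : p Y ≠ ⊥) : p (X ∩ Y) ≠ ⊥ ∧ p (X ∪ Y) ≠ ⊥ := by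
  have h := hsup X Y
  have hXY : p X + p Y ≠ ⊥ := by
    rw [Ne, EReal.add_eq_bot_iff]; push_neg; exact ⟨hX, hY⟩
  constructor <;> intro hb <;> rw [hb] at h
  · rw [EReal.bot_add] at h
    exact hXY (le_bot_iff.mp h)
  · rw [EReal.add_bot] at h
    exact hXY (le_bot_iff.mp h)

variable (hd : CanonicalData p q β C Sj)
include hd

lemma C_prev_subset {j : ℕ} (h1 : 1 ≤ j) (h2 : j ≤ q) : C (j - 1) ⊆ C j := by
  rw [hd.hCj j h1 h2]; exact subset_union_left

lemma Sj_subset_C {j : ℕ} (h1 : 1 ≤ j) (h2 : j ≤ q) : Sj j ⊆ C j := by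
  rw [hd.hCj j h1 h2]; exact subset_union_right

lemma Sj_disj {j : ℕ} (h1 : 1 ≤ j) (h2 : j ≤ q) : Disjoint (Sj j) (C (j - 1)) := by
  have := hd.hSsub j h1 h2
  exact Finset.disjoint_left.mpr fun a ha hb => (Finset.mem_sdiff.mp (this ha)).2 hb

lemma card_C {j : ℕ} (h1 : 1 ≤ j) (h2 : j ≤ q) :
    (C j).card = (C (j - 1)).card + (Sj j).card := by
  rw [hd.hCj j h1 h2, Finset.card_union_of_disjoint (Sj_disj hd h1 h2).symm, Nat.add_comm]

lemma C_mono {i j : ℕ} (hij : i ≤ j) (hj : j ≤ q) : C i ⊆ C j := by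
  induction j, hij using Nat.le_induction with
  | base => exact subset_rfl
  | succ n hn ih =>
    refine (ih (le_trans (Nat.le_succ n) hj)).trans ?_
    have := C_prev_subset hd (j := n + 1) (Nat.succ_le_succ (Nat.zero_le n)) hj
    simpa using this

lemma pC_ne_bot (hfin : p (Finset.univ : Finset α) ≠ ⊥) (hp0 : p ∅ = 0)
    {j : ℕ} (h2 : j ≤ q) : p (C j) ≠ ⊥ := by
  rcases Nat.eq_zero_or_pos j with rfl | h1
  · rw [hd.hC0, hp0]; simp [← EReal.coe_zero]
  · have hs := hd.hSmax j h1 h2 (Finset.univ \ C (j - 1)) subset_rfl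
    rw [Finset.sdiff_union_self_eq_union, show Finset.univ ∪ C (j-1) = Finset.univ by simp, show Sj j ∪ C (j-1) = C j from by rw [hd.hCj j h1 h2, Finset.union_comm]] at hs
    intro hb
    rw [hb, EReal.bot_sub] at hs
    exact sub_coe_ne_bot hfin _ (le_bot_iff.mp hs)


lemma p_ne_top (hint : IntegerValued p) (X : Finset α) : p X ≠ ⊤ := by
  rcases hint X with h | ⟨n, h⟩ <;> simp [h]

lemma C_union_eq {j : ℕ} (h1 : 1 ≤ j) (h2 : j ≤ q) : Sj j ∪ C (j - 1) = C j := by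
  rw [hd.hCj j h1 h2, Finset.union_comm]

lemma beta_strict (hfin : p (Finset.univ : Finset α) ≠ ⊥) (hp0 : p ∅ = 0)
    (hint : IntegerValued p) {j : ℕ} (h1 : 1 ≤ j) (h2 : j + 1 ≤ q) :
    β (j + 1) < β j := by
  obtain ⟨X, hXsub, hXne, hXlt⟩ := hd.hβattain (j + 1) (by omega) h2
  simp only [Nat.add_sub_cancel] at hXsub hXlt
  have hjq : j ≤ q := by omega
  have hWsub : X ∪ Sj j ⊆ Finset.univ \ C (j - 1) := by
    refine Finset.union_subset ?_ (hd.hSsub j h1 hjq)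
    exact hXsub.trans (Finset.sdiff_subset_sdiff subset_rfl (C_prev_subset hd h1 hjq))
  have hsmax := hd.hSmax j h1 hjq (X ∪ Sj j) hWsub
  have hU : (X ∪ Sj j) ∪ C (j - 1) = X ∪ C j := by
    rw [Finset.union_assoc, C_union_eq hd h1 hjq]
  rw [hU, C_union_eq hd h1 hjq] at hsmax
  have hdisj : Disjoint X (Sj j) := by
    have hs := Sj_subset_C hd h1 hjq
    exact Finset.disjoint_left.mpr fun a ha hb => (Finset.mem_sdiff.mp (hXsub ha)).2 (hs hb)
  have hcard : (X ∪ Sj j).card = X.card + (Sj j).card := Finset.card_union_of_disjoint hdisj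
  have hdC : p (C j) ≠ ⊥ := pC_ne_bot hd hfin hp0 hjq
  obtain ⟨d, hdeq⟩ := getInt hint hdC
  have hcb : p (X ∪ C j) ≠ ⊥ := by
    intro hb; rw [hb, hdeq] at hXlt
    rw [show ((d:ℝ):EReal) + ((((β (j+1) - 1) * (X.card : ℤ) : ℤ) : ℝ) : EReal)
        = (((d + (β (j+1) - 1) * (X.card : ℤ) : ℤ):ℝ):EReal) by push_cast; ring] at hXlt
    exact (hXlt.trans_le bot_le).false
  obtain ⟨c, hceq⟩ := getInt hint hcb
  rw [hdeq, hceq] at hXlt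
  rw [hdeq, hceq, hcard] at hsmax
  have hXlt' : d + (β (j+1) - 1) * (X.card : ℤ) < c := by exact_mod_cast hXlt
  have hsmax' : c - (β j - 1) * ((X.card : ℤ) + ((Sj j).card : ℤ)) ≤ d - (β j - 1) * ((Sj j).card : ℤ) := by
    have : ((c:ℝ):EReal) - ((((β j - 1) * (((X.card:ℤ) + ((Sj j).card:ℤ))) : ℤ):ℝ):EReal)
        ≤ ((d:ℝ):EReal) - ((((β j - 1) * ((Sj j).card : ℤ) : ℤ):ℝ):EReal) := by
      convert hsmax using 3 <;> push_cast <;> ring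
    rw [← EReal.coe_sub, ← EReal.coe_sub, EReal.coe_le_coe_iff] at this
    exact_mod_cast this
  have hX0 : 0 < (X.card : ℤ) := by exact_mod_cast Finset.card_pos.mpr hXne
  have hmul : (β (j+1) - 1) * (X.card : ℤ) < (β j - 1) * (X.card : ℤ) := by linarith
  have := (mul_lt_mul_iff_of_pos_right hX0).mp hmul
  linarith

lemma beta_anti (hfin : p (Finset.univ : Finset α) ≠ ⊥) (hp0 : p ∅ = 0)
    (hint : IntegerValued p) {i j : ℕ} (h1 : 1 ≤ i) (hij : i ≤ j) (h2 : j ≤ q) :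
    β j ≤ β i := by
  induction j, hij using Nat.le_induction with
  | base => exact le_rfl
  | succ n hn ih =>
    have := beta_strict hd hfin hp0 hint (le_trans h1 hn) h2
    exact le_of_lt (lt_of_lt_of_le this (ih (by omega)))

lemma beta_anti_strict (hfin : p (Finset.univ : Finset α) ≠ ⊥) (hp0 : p ∅ = 0)
    (hint : IntegerValued p) {i j : ℕ} (h1 : 1 ≤ i) (hij : i < j) (h2 : j ≤ q) :
    β j < β i := by
  have hs := beta_strict hd hfin hp0 hint h1 (by omega : i + 1 ≤ q)
  have ha := beta_anti hd hfin hp0 hint (by omega : 1 ≤ i + 1) (by omega : i + 1 ≤ j) h2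
  omega

lemma Sj_nonempty (hfin : p (Finset.univ : Finset α) ≠ ⊥) (hp0 : p ∅ = 0)
    (hint : IntegerValued p) {j : ℕ} (h1 : 1 ≤ j) (h2 : j ≤ q) : (Sj j).Nonempty := by
  rw [Finset.nonempty_iff_ne_empty]
  intro hS
  obtain ⟨X, hXsub, hXne, hXlt⟩ := hd.hβattain j h1 h2
  have hsmax := hd.hSmax j h1 h2 X hXsub
  rw [hS] at hsmax
  simp only [Finset.empty_union, Finset.card_empty, Nat.cast_zero, mul_zero,
    Int.cast_zero, EReal.coe_zero, sub_zero] at hsmax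
  have hdC : p (C (j - 1)) ≠ ⊥ := pC_ne_bot hd hfin hp0 (by omega)
  obtain ⟨d, hdeq⟩ := getInt hint hdC
  have hcb : p (X ∪ C (j - 1)) ≠ ⊥ := by
    intro hb; rw [hb, hdeq] at hXlt
    rw [show ((d:ℝ):EReal) + ((((β j - 1) * (X.card : ℤ) : ℤ) : ℝ) : EReal)
        = (((d + (β j - 1) * (X.card : ℤ) : ℤ):ℝ):EReal) by push_cast; ring] at hXlt
    exact (hXlt.trans_le bot_le).false
  obtain ⟨c, hceq⟩ := getInt hint hcb
  rw [hdeq, hceq] at hXlt hsmax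
  have hXlt' : d + (β j - 1) * (X.card : ℤ) < c := by exact_mod_cast hXlt
  have hsmax' : c - (β j - 1) * (X.card : ℤ) ≤ d := by
    rw [← EReal.coe_sub, EReal.coe_le_coe_iff] at hsmax
    exact_mod_cast hsmax
  linarith

lemma claimA (hfin : p (Finset.univ : Finset α) ≠ ⊥) (hp0 : p ∅ = 0)
    (hsup : Supermodular p) (hint : IntegerValued p) {j : ℕ} (h1 : 1 ≤ j) (h2 : j ≤ q)
    (X : Finset α) :
    p X ≤ p (X ∩ C (j - 1)) + (((β j * ((X \ C (j - 1)).card : ℤ) : ℤ) : ℝ) : EReal) := by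
  by_cases hb : p X = ⊥
  · rw [hb]; exact bot_le
  have hdC : p (C (j - 1)) ≠ ⊥ := pC_ne_bot hd hfin hp0 (by omega)
  obtain ⟨hib, hub⟩ := inter_union_ne_bot hsup hb hdC
  obtain ⟨a, haeq⟩ := getInt hint hb
  obtain ⟨bb, hbeq⟩ := getInt hint hib
  obtain ⟨c, hceq⟩ := getInt hint hub
  obtain ⟨d, hdeq⟩ := getInt hint hdC
  have hsm := hsup X (C (j - 1))
  by_cases hempty : X \ C (j - 1) = ∅
  · have hXsub : X ⊆ C (j - 1) := by
      rwa [Finset.sdiff_eq_empty_iff_subset] at hempty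
    rw [hempty, Finset.inter_eq_left.mpr hXsub]
    simp
  · have hne : (X \ C (j - 1)).Nonempty := Finset.nonempty_iff_ne_empty.mpr hempty
    have hubd := hd.hβub j h1 h2 (X \ C (j - 1))
      (Finset.sdiff_subset_sdiff (Finset.subset_univ X) subset_rfl) hne
    rw [Finset.sdiff_union_self_eq_union] at hubd
    rw [haeq, hbeq] at hsm
    rw [hceq, hdeq] at hsm hubd
    rw [haeq, hbeq]
    have hsm' : a + d ≤ bb + c := by
      rw [← EReal.coe_add, ← EReal.coe_add, EReal.coe_le_coe_iff] at hsm
      exact_mod_cast hsm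
    have hubd' : c ≤ d + β j * (((X \ C (j - 1)).card : ℤ)) := by
      rw [show ((d:ℝ):EReal) + (((β j * (((X \ C (j-1)).card : ℤ)) : ℤ) : ℝ) : EReal)
          = (((d + β j * (((X \ C (j-1)).card : ℤ)) : ℤ):ℝ):EReal) by push_cast; ring] at hubd
      exact_mod_cast hubd
    rw [show ((bb:ℝ):EReal) + (((β j * (((X \ C (j-1)).card : ℤ)) : ℤ) : ℝ) : EReal)
        = (((bb + β j * (((X \ C (j-1)).card : ℤ)) : ℤ):ℝ):EReal) by push_cast; ring]
    rw [EReal.coe_le_coe_iff]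
    have : a ≤ bb + β j * (((X \ C (j - 1)).card : ℤ)) := by linarith
    exact_mod_cast this


lemma chainMax (hfin : p (Finset.univ : Finset α) ≠ ⊥) (hp0 : p ∅ = 0)
    (hsup : Supermodular p) (hint : IntegerValued p) :
    ∀ j, j ≤ q → ∀ m : ℤ, (∀ i, 1 ≤ i → i ≤ j → m ≤ β i - 1) →
    ∀ Y : Finset α, Y ⊆ C j →
      (p Y - (((m * (Y.card : ℤ) : ℤ) : ℝ) : EReal) ≤
        p (C j) - (((m * ((C j).card : ℤ) : ℤ) : ℝ) : EReal)) ∧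
      (p Y - (((m * (Y.card : ℤ) : ℤ) : ℝ) : EReal) =
        p (C j) - (((m * ((C j).card : ℤ) : ℤ) : ℝ) : EReal) → Y = C j) := by
  intro j
  induction j with
  | zero =>
    intro _ m _ Y hY
    rw [hd.hC0] at hY ⊢
    have hYe : Y = ∅ := Finset.subset_empty.mp hY
    subst hYe
    exact ⟨le_rfl, fun _ => rfl⟩
  | succ j ih =>
    intro hq1 m hm Y hY
    have hjq : j ≤ q := by omega
    have h1 : 1 ≤ j + 1 := by omega
    have hmb : m ≤ β (j + 1) - 1 := hm (j + 1) h1 le_rfl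
    have ihm : ∀ i, 1 ≤ i → i ≤ j → m ≤ β i - 1 := fun i a b => hm i a (by omega)
    have hCeq : Sj (j + 1) ∪ C j = C (j + 1) := by
      have := C_union_eq hd h1 hq1; simpa using this
    have hCsub : C j ⊆ C (j + 1) := by
      have := C_prev_subset hd h1 hq1; simpa using this
    have heC : p (C (j + 1)) ≠ ⊥ := pC_ne_bot hd hfin hp0 hq1
    have hdC : p (C j) ≠ ⊥ := pC_ne_bot hd hfin hp0 hjq
    obtain ⟨e, heeq⟩ := getInt hint heC
    obtain ⟨d, hdeq⟩ := getInt hint hdC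
    by_cases hb : p Y = ⊥
    · constructor
      · rw [hb, EReal.bot_sub]; exact bot_le
      · intro h; exfalso
        rw [hb, EReal.bot_sub] at h
        exact sub_coe_ne_bot heC _ h.symm
    · obtain ⟨hib, hub⟩ := inter_union_ne_bot hsup hb hdC
      obtain ⟨a, haeq⟩ := getInt hint hb
      obtain ⟨bb, hbeq⟩ := getInt hint hib
      obtain ⟨c, hceq⟩ := getInt hint hub
      have hZsub : Y \ C j ⊆ Finset.univ \ C j :=
        Finset.sdiff_subset_sdiff (Finset.subset_univ Y) subset_rfl
      have hsmax := hd.hSmax (j + 1) h1 hq1 (Y \ C j) hZsub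
      simp only [Nat.add_sub_cancel] at hsmax
      rw [Finset.sdiff_union_self_eq_union, hCeq, hceq, heeq] at hsmax
      have hsmax' : c - (β (j + 1) - 1) * (((Y \ C j).card : ℤ)) ≤
          e - (β (j + 1) - 1) * (((Sj (j + 1)).card : ℤ)) := by
        rw [← EReal.coe_sub, ← EReal.coe_sub, EReal.coe_le_coe_iff] at hsmax
        exact_mod_cast hsmax
      have hIH := ih hjq m ihm (Y ∩ C j) Finset.inter_subset_right
      have hIH1 := hIH.1
      rw [hbeq, hdeq] at hIH1
      have hIH1' : bb - m * (((Y ∩ C j).card : ℤ)) ≤ d - m * (((C j).card : ℤ)) := by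
        rw [← EReal.coe_sub, ← EReal.coe_sub, EReal.coe_le_coe_iff] at hIH1
        exact_mod_cast hIH1
      have hsm := hsup Y (C j)
      rw [haeq, hbeq, hceq, hdeq] at hsm
      have hsm' : a + d ≤ bb + c := by
        rw [← EReal.coe_add, ← EReal.coe_add, EReal.coe_le_coe_iff] at hsm
        exact_mod_cast hsm
      have hc1 : ((Y ∪ C j).card : ℤ) + ((Y ∩ C j).card : ℤ) =
          (Y.card : ℤ) + ((C j).card : ℤ) := by
        exact_mod_cast congrArg (Nat.cast (R := ℤ)) (Finset.card_union_add_card_inter Y (C j))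
      have hc1m : m * ((Y ∪ C j).card : ℤ) + m * ((Y ∩ C j).card : ℤ) =
          m * (Y.card : ℤ) + m * ((C j).card : ℤ) := by
        rw [← mul_add, ← mul_add, hc1]
      have hc2 : ((C (j + 1)).card : ℤ) = ((C j).card : ℤ) + ((Sj (j + 1)).card : ℤ) := by
        have := card_C hd h1 hq1
        simp only [Nat.add_sub_cancel] at this
        exact_mod_cast this
      have hc3 : ((Y ∪ C j).card : ℤ) = ((C j).card : ℤ) + (((Y \ C j).card : ℤ)) := by
        have h' : ((Y \ C j) ∪ C j).card = (Y \ C j).card + (C j).card :=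
          Finset.card_union_of_disjoint Finset.sdiff_disjoint
        rw [Finset.sdiff_union_self_eq_union] at h'
        rw [h']; push_cast; ring
      have hz : (((Y \ C j).card : ℤ)) = ((Y ∪ C j).card : ℤ) - ((C j).card : ℤ) := by
        linarith
      have hs : (((Sj (j + 1)).card : ℤ)) = ((C (j + 1)).card : ℤ) - ((C j).card : ℤ) := by
        linarith
      rw [hz, hs] at hsmax'
      have ht : ((Y ∪ C j).card : ℤ) - ((C (j + 1)).card : ℤ) ≤ 0 := by
        have : (Y ∪ C j).card ≤ (C (j + 1)).card :=
          Finset.card_le_card (Finset.union_subset hY hCsub)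
        have h' : ((Y ∪ C j).card : ℤ) ≤ ((C (j + 1)).card : ℤ) := by exact_mod_cast this
        linarith
      have key : (β (j + 1) - 1) * (((Y ∪ C j).card : ℤ) - ((C (j + 1)).card : ℤ)) ≤
          m * (((Y ∪ C j).card : ℤ) - ((C (j + 1)).card : ℤ)) :=
        mul_le_mul_of_nonpos_right hmb ht
      constructor
      · rw [haeq, heeq, ← EReal.coe_sub, ← EReal.coe_sub, EReal.coe_le_coe_iff]
        have : a - m * (Y.card : ℤ) ≤ e - m * ((C (j + 1)).card : ℤ) := by
          linarith
        exact_mod_cast this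
      · intro heq
        rw [haeq, heeq, ← EReal.coe_sub, ← EReal.coe_sub] at heq
        have heq' : a - m * (Y.card : ℤ) = e - m * ((C (j + 1)).card : ℤ) := by
          exact_mod_cast heq
        have hup : bb - m * (((Y ∩ C j).card : ℤ)) = d - m * (((C j).card : ℤ)) :=
          le_antisymm hIH1' (by linarith)
        have hupE : p (Y ∩ C j) - (((m * ((Y ∩ C j).card : ℤ) : ℤ) : ℝ) : EReal) =
            p (C j) - (((m * ((C j).card : ℤ) : ℤ) : ℝ) : EReal) := by
          rw [hbeq, hdeq, ← EReal.coe_sub, ← EReal.coe_sub]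
          exact_mod_cast hup
        have hYC : Y ∩ C j = C j := hIH.2 hupE
        have hCjY : C j ⊆ Y := by rw [← hYC]; exact Finset.inter_subset_left
        have hslack : c - (β (j + 1) - 1) * (((Y ∪ C j).card : ℤ) - ((C j).card : ℤ)) =
            e - (β (j + 1) - 1) * (((C (j + 1)).card : ℤ) - ((C j).card : ℤ)) :=
          le_antisymm hsmax' (by linarith)
        have hminE : p ((Y \ C j) ∪ C j) -
              ((((β (j + 1) - 1) * (((Y \ C j).card : ℤ)) : ℤ) : ℝ) : EReal) =
            p (Sj (j + 1) ∪ C j) -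
              ((((β (j + 1) - 1) * (((Sj (j + 1)).card : ℤ)) : ℤ) : ℝ) : EReal) := by
          rw [Finset.sdiff_union_self_eq_union, hCeq, hceq, heeq, ← EReal.coe_sub,
            ← EReal.coe_sub]
          have hq' : c - (β (j + 1) - 1) * (((Y \ C j).card : ℤ)) =
              e - (β (j + 1) - 1) * (((Sj (j + 1)).card : ℤ)) := by
            rw [hz, hs]; exact hslack
          exact_mod_cast hq'
        have hSZ : Sj (j + 1) ⊆ Y \ C j := hd.hSmin (j + 1) h1 hq1 (Y \ C j) hZsub hminE
        apply Finset.Subset.antisymm hY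
        rw [← hCeq]
        exact Finset.union_subset (hSZ.trans Finset.sdiff_subset) hCjY


lemma C_isMax (hfin : p (Finset.univ : Finset α) ≠ ⊥) (hp0 : p ∅ = 0)
    (hsup : Supermodular p) (hint : IntegerValued p) {k : ℕ} (hk : k ≤ q) (m : ℤ)
    (h1 : k = q ∨ β (k + 1) ≤ m) (h2 : ∀ i, 1 ≤ i → i ≤ k → m ≤ β i - 1) :
    IsMaximizer p (m : ℝ) (C k) := by
  intro X
  rw [coe_mul_card, coe_mul_card]
  have hstep2 := (chainMax hd hfin hp0 hsup hint k hk m h2 (X ∩ C k)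
    Finset.inter_subset_right).1
  refine le_trans ?_ hstep2
  by_cases hb : p X = ⊥
  · rw [hb, EReal.bot_sub]; exact bot_le
  by_cases hkq : k = q
  · subst hkq; rw [hd.hCq, Finset.inter_univ]
  · have hm1 : β (k + 1) ≤ m := h1.resolve_left hkq
    have hk1 : k + 1 ≤ q := by omega
    have hA := claimA hd hfin hp0 hsup hint (j := k + 1) (by omega) hk1 X
    simp only [Nat.add_sub_cancel] at hA
    have hdC : p (C k) ≠ ⊥ := pC_ne_bot hd hfin hp0 hk
    obtain ⟨hib, -⟩ := inter_union_ne_bot hsup hb hdC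
    obtain ⟨a, haeq⟩ := getInt hint hb
    obtain ⟨bb, hbeq⟩ := getInt hint hib
    rw [haeq, hbeq] at hA ⊢
    have hA' : a ≤ bb + β (k + 1) * (((X \ C k).card : ℤ)) := by
      rw [show ((bb:ℝ):EReal) + (((β (k+1) * (((X \ C k).card : ℤ)) : ℤ) : ℝ) : EReal)
          = (((bb + β (k+1) * (((X \ C k).card : ℤ)) : ℤ):ℝ):EReal) by push_cast; ring] at hA
      exact_mod_cast hA
    have hcard : (X.card : ℤ) = ((X ∩ C k).card : ℤ) + ((X \ C k).card : ℤ) := by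
      have h' := Finset.card_inter_add_card_sdiff X (C k)
      exact_mod_cast (congrArg (Nat.cast (R := ℤ)) h').symm
    have hcardm : m * (X.card : ℤ) =
        m * ((X ∩ C k).card : ℤ) + m * ((X \ C k).card : ℤ) := by
      rw [← mul_add, ← hcard]
    have hprod : (β (k + 1) - m) * (((X \ C k).card : ℤ)) ≤ 0 :=
      mul_nonpos_iff.mpr (Or.inr ⟨by linarith, by positivity⟩)
    rw [← EReal.coe_sub, ← EReal.coe_sub, EReal.coe_le_coe_iff]
    have : a - m * (X.card : ℤ) ≤ bb - m * ((X ∩ C k).card : ℤ) := by linarith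
    exact_mod_cast this

lemma Lval (hfin : p (Finset.univ : Finset α) ≠ ⊥) (hp0 : p ∅ = 0)
    (hsup : Supermodular p) (hint : IntegerValued p) {L : ℝ → Finset α}
    (hL : SmallestMaximizerFun p L) {k : ℕ} (hk : k ≤ q) (m : ℤ)
    (h1 : k = q ∨ β (k + 1) ≤ m) (h2 : ∀ i, 1 ≤ i → i ≤ k → m ≤ β i - 1) :
    L (m : ℝ) = C k := by
  have hmax := C_isMax hd hfin hp0 hsup hint hk m h1 h2
  have hsubL : L (m : ℝ) ⊆ C k := (hL (m : ℝ)).2 _ hmax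
  have hfeq : p (L (m : ℝ)) - (((m : ℝ) * ((L (m : ℝ)).card : ℝ) : ℝ) : EReal) =
      p (C k) - (((m : ℝ) * ((C k).card : ℝ) : ℝ) : EReal) :=
    le_antisymm (hmax _) ((hL (m : ℝ)).1 _)
  rw [coe_mul_card, coe_mul_card] at hfeq
  exact (chainMax hd hfin hp0 hsup hint k hk m h2 (L (m : ℝ)) hsubL).2 hfeq

lemma C_ne (hfin : p (Finset.univ : Finset α) ≠ ⊥) (hp0 : p ∅ = 0)
    (hint : IntegerValued p) {j : ℕ} (h1 : 1 ≤ j) (h2 : j ≤ q) : C (j - 1) ≠ C j := by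
  intro h
  have hcards := card_C hd h1 h2
  have hne := Sj_nonempty hd hfin hp0 hint h1 h2
  have hpos := Finset.card_pos.mpr hne
  rw [h] at hcards
  omega

end Aux

/-- An integer `β` is an essential value iff `L(β) ≠ L(β−1)`; moreover
`L(β_j − 1) = L(β_{j+1})` for consecutive essential values, `L(β₁) = ∅`, and
`L(β_q − 1) = S`. -/
theorem essential_values_via_L (p : Finset α → EReal) (hp0 : p ∅ = 0)
    (hfin : p (Finset.univ : Finset α) ≠ ⊥) (hsup : Supermodular p)
    (hint : IntegerValued p) (q : ℕ) (hq : 1 ≤ q) (β : ℕ → ℤ) (C Sj : ℕ → Finset α)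
    (hdata : CanonicalData p q β C Sj)
    (L : ℝ → Finset α) (hL : SmallestMaximizerFun p L) :
    (∀ b : ℤ, (∃ j, 1 ≤ j ∧ j ≤ q ∧ β j = b) ↔ L (b : ℝ) ≠ L ((b : ℝ) - 1)) ∧
    (∀ j, 1 ≤ j → j + 1 ≤ q → L ((β j : ℝ) - 1) = L ((β (j + 1) : ℝ))) ∧
    L ((β 1 : ℝ)) = ∅ ∧ L ((β q : ℝ) - 1) = Finset.univ := by
  have hd := hdata
  have castsub : ∀ b : ℤ, ((b : ℝ) - 1) = (((b - 1 : ℤ)) : ℝ) := by intro b; push_cast; ring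
  refine ⟨?_, ?_, ?_, ?_⟩
  · -- part 1
    intro b
    constructor
    · rintro ⟨j, hj1, hjq, hbj⟩
      have e1 : L (b : ℝ) = C (j - 1) := by
        refine Lval hd hfin hp0 hsup hint hL (k := j - 1) (by omega) b ?_ ?_
        · right
          rw [show j - 1 + 1 = j by omega]
          omega
        · intro i hi1 hik
          have := beta_anti_strict hd hfin hp0 hint hi1 (by omega : i < j) hjq
          omega
      have e2 : L ((b : ℝ) - 1) = C j := by
        rw [castsub b]
        refine Lval hd hfin hp0 hsup hint hL (k := j) hjq (b - 1) ?_ ?_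
        · by_cases hjq' : j = q
          · exact Or.inl hjq'
          · right
            have := beta_strict hd hfin hp0 hint hj1 (by omega : j + 1 ≤ q)
            omega
        · intro i hi1 hik
          have := beta_anti hd hfin hp0 hint hi1 hik hjq
          omega
      rw [e1, e2]
      exact C_ne hd hfin hp0 hint hj1 hjq
    · intro hne
      by_contra hno
      push_neg at hno
      have hkey : ∃ k, k ≤ q ∧ (k = q ∨ β (k + 1) ≤ b - 1) ∧
          (∀ i, 1 ≤ i → i ≤ k → b ≤ β i - 1) := by
        by_cases hT : ∃ i, 1 ≤ i ∧ i ≤ q ∧ β i ≤ b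
        · classical
          obtain ⟨ht1, htq, htb⟩ := Nat.find_spec hT
          have htb' : β (Nat.find hT) ≤ b - 1 := by
            have := hno (Nat.find hT) ht1 htq; omega
          refine ⟨Nat.find hT - 1, by omega, Or.inr ?_, ?_⟩
          · rw [show Nat.find hT - 1 + 1 = Nat.find hT by omega]
            exact htb'
          · intro i hi1 hik
            have hmin := Nat.find_min hT (show i < Nat.find hT by omega)
            have : ¬ (β i ≤ b) := fun hc => hmin ⟨hi1, by omega, hc⟩
            omega
        · push_neg at hT
          refine ⟨q, le_rfl, Or.inl rfl, fun i hi1 hik => ?_⟩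
          have := hT i hi1 hik
          omega
      obtain ⟨k, hkq, hk1, hk2⟩ := hkey
      have e1 : L (b : ℝ) = C k := by
        refine Lval hd hfin hp0 hsup hint hL hkq b ?_ (fun i a c => hk2 i a c)
        rcases hk1 with h | h
        · exact Or.inl h
        · exact Or.inr (by omega)
      have e2 : L ((b : ℝ) - 1) = C k := by
        rw [castsub b]
        refine Lval hd hfin hp0 hsup hint hL hkq (b - 1) hk1 (fun i a c => by
          have := hk2 i a c; omega)
      exact hne (e1.trans e2.symm)
  · -- part 2
    intro j hj1 hjq
    have e1 : L ((β j : ℝ) - 1) = C j := by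
      rw [castsub (β j)]
      refine Lval hd hfin hp0 hsup hint hL (k := j) (by omega) (β j - 1) ?_ ?_
      · right
        have := beta_strict hd hfin hp0 hint hj1 hjq
        omega
      · intro i hi1 hik
        have := beta_anti hd hfin hp0 hint hi1 hik (by omega)
        omega
    have e2 : L ((β (j + 1) : ℝ)) = C j := by
      refine Lval hd hfin hp0 hsup hint hL (k := j) (by omega) (β (j + 1)) (Or.inr le_rfl) ?_
      intro i hi1 hik
      have := beta_anti_strict hd hfin hp0 hint hi1 (by omega : i < j + 1) hjq
      omega
    rw [e1, e2]
  · -- part 3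
    have e1 : L ((β 1 : ℝ)) = C 0 :=
      Lval hd hfin hp0 hsup hint hL (k := 0) (Nat.zero_le q) (β 1)
        (Or.inr le_rfl) (fun i hi1 hik => by omega)
    rw [e1, hd.hC0]
  · -- part 4
    have e1 : L ((β q : ℝ) - 1) = C q := by
      rw [castsub (β q)]
      refine Lval hd hfin hp0 hsup hint hL (k := q) le_rfl (β q - 1) (Or.inl rfl) ?_
      intro i hi1 hik
      have := beta_anti hd hfin hp0 hint hi1 hik le_rfl
      omega
    rw [e1, hd.hCq]
end

section
/- Each member S_j of the canonical partition is the union of those members Ŝ_i of the principal partition whose critical value λ_i satisfies ⌈λ_i⌉ = β_j. In particular, the canonical partition is an aggregation of the principal partition, and the canonical chain is a subchain of the principal chain. -/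
open Finset

variable {α : Type*} [Fintype α] [DecidableEq α]

/-- `λ` is a critical value: the family of maximizers of `p(X) − λ|X|` has at
least two members. -/
def IsCriticalValue (p : Finset α → EReal) (lam : ℝ) : Prop :=
  ∃ X Y : Finset α, X ≠ Y ∧ IsMaximizer p lam X ∧ IsMaximizer p lam Y

/-! Supermodularity makes the smallest maximizer `L(λ)` antitone in `λ` (uncrossing `L a` and
`L b`). It changes only at critical values: if `L a ≠ L b`, the lines `λ ↦ p(X) − λ|X|` of
`X = L a` and `Y = L b` cross at some `c ∈ (a, b]`, and there either both are maximizers, or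
`L c` lies strictly between `Y` and `X` and one recurses on `(c, b]`. Hence `L μ` is the member of
the principal chain `L(λ₁) ⊆ ⋯ ⊆ L(λ_r) ⊆ S` that follows the critical values exceeding `μ`, and
`L(β − 1) \ L(β)` telescopes into the union of the `Ŝ_i` with `λ_i ∈ (β − 1, β]`, i.e.
`⌈λ_i⌉ = β`. -/

variable {S : Type*}

namespace IsMaximizer

variable {p : Finset S → EReal} {μ : ℝ} {X Y : Finset S}

lemma ne_bot_s8 (hp0 : p ∅ = 0) (h : IsMaximizer p μ X) : p X ≠ ⊥ := by
  intro hX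
  simpa [hp0, hX] using h ∅

lemma of_le (hX : IsMaximizer p μ X)
    (h : p X - ((μ * X.card : ℝ) : EReal) ≤ p Y - ((μ * Y.card : ℝ) : EReal)) :
    IsMaximizer p μ Y :=
  fun Z => (hX Z).trans h

end IsMaximizer

lemma IntegerValued.exists_eq_coe {p : Finset S → EReal} (hint : IntegerValued p)
    {X : Finset S} (hX : p X ≠ ⊥) : ∃ x : ℝ, p X = x := by
  rcases hint X with h | ⟨n, h⟩
  · exact absurd h hX
  · exact ⟨n, h⟩

/-- By supermodularity, `X ∩ Y` gains over `Y` at `b` at least what `X` gains over `X ∪ Y`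
at `a ≤ b`. -/
lemma isMaximizer_inter [DecidableEq S] {p : Finset S → EReal} (hp0 : p ∅ = 0)
    (hint : IntegerValued p) (hsup : Supermodular p) {a b : ℝ} (hab : a ≤ b) {X Y : Finset S}
    (hX : IsMaximizer p a X) (hY : IsMaximizer p b Y) : IsMaximizer p b (X ∩ Y) := by
  obtain ⟨x, hx⟩ := hint.exists_eq_coe (hX.ne_bot_s8 hp0)
  obtain ⟨y, hy⟩ := hint.exists_eq_coe (hY.ne_bot_s8 hp0)
  have hsum := hsup X Y
  rw [hx, hy] at hsum
  obtain ⟨i, hi⟩ := hint.exists_eq_coe (p := p) (X := X ∩ Y) fun h => by simp [h] at hsum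
  obtain ⟨u, hu⟩ := hint.exists_eq_coe (p := p) (X := X ∪ Y) fun h => by simp [h] at hsum
  rw [hi, hu] at hsum
  have hXU := hX (X ∪ Y)
  rw [hx, hu] at hXU
  refine hY.of_le ?_
  rw [hy, hi]
  have hsum' : x + y ≤ i + u := by exact_mod_cast hsum
  have hXU' : u - a * (X ∪ Y).card ≤ x - a * X.card := by exact_mod_cast hXU
  have hcard : ((X ∪ Y).card : ℝ) = X.card + Y.card - (X ∩ Y).card := by
    rw [eq_sub_iff_add_eq, add_comm]
    exact_mod_cast card_inter_add_card_union X Y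
  rw [hcard] at hXU'
  have hIY : ((X ∩ Y).card : ℝ) ≤ Y.card := by exact_mod_cast card_le_card inter_subset_right
  have : y - b * Y.card ≤ i - b * (X ∩ Y).card := by
    nlinarith [mul_nonneg (sub_nonneg.2 hab) (sub_nonneg.2 hIY)]
  exact_mod_cast this

namespace SmallestMaximizerFun

variable {p : Finset S → EReal} {L : ℝ → Finset S}

lemma antitone [DecidableEq S] (hp0 : p ∅ = 0) (hint : IntegerValued p)
    (hsup : Supermodular p) (hL : SmallestMaximizerFun p L) : Antitone L := fun a b hab =>
  ((hL b).2 _ (isMaximizer_inter hp0 hint hsup hab (hL a).1 (hL b).1)).trans inter_subset_left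

lemma exists_isCriticalValue_of_ne [DecidableEq S] (hp0 : p ∅ = 0) (hint : IntegerValued p)
    (hsup : Supermodular p) (hL : SmallestMaximizerFun p L) {a b : ℝ} (hab : a ≤ b)
    (hne : L a ≠ L b) : ∃ μ ∈ Set.Ioc a b, IsCriticalValue p μ := by
  induction hX : L a using Finset.strongInduction generalizing a with
  | H X ih =>
  subst hX
  have hanti := hL.antitone hp0 hint hsup
  obtain ⟨x, hx⟩ := hint.exists_eq_coe ((hL a).1.ne_bot_s8 hp0)
  obtain ⟨y, hy⟩ := hint.exists_eq_coe ((hL b).1.ne_bot_s8 hp0)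
  have hcard : ((L b).card : ℝ) < (L a).card := by
    exact_mod_cast card_lt_card (ssubset_of_subset_of_ne (hanti hab) hne.symm)
  have hlt_a : y - a * (L b).card < x - a * (L a).card := by
    by_contra! h
    refine hne (subset_antisymm ((hL a).2 _ ((hL a).1.of_le ?_)) (hanti hab))
    rw [hx, hy]
    exact_mod_cast h
  have hle_b : x - b * (L a).card ≤ y - b * (L b).card := by
    have h := (hL b).1 (L a)
    rw [hx, hy] at h
    exact_mod_cast h
  set c := (x - y) / ((L a).card - (L b).card) with hc
  have hcross : c * ((L a).card - (L b).card) = x - y := div_mul_cancel₀ _ (sub_pos.2 hcard).ne'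
  have hac : a < c := by
    rw [hc, lt_div_iff₀ (sub_pos.2 hcard)]
    linarith
  have hc_le_b : c ≤ b := by
    rw [hc, div_le_iff₀ (sub_pos.2 hcard)]
    linarith
  have hmax_iff : IsMaximizer p c (L a) ↔ IsMaximizer p c (L b) := by
    constructor <;> intro h <;> refine h.of_le ?_ <;> rw [hx, hy] <;> exact_mod_cast by linarith
  by_cases hmax : IsMaximizer p c (L a)
  · exact ⟨c, ⟨hac, hc_le_b⟩, L a, L b, hne, hmax, hmax_iff.1 hmax⟩
  · have hLc_ne_a : L c ≠ L a := fun h => hmax (h ▸ (hL c).1)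
    have hLc_ne_b : L c ≠ L b := fun h => hmax (hmax_iff.2 (h ▸ (hL c).1))
    obtain ⟨μ, hμ, hcrit⟩ :=
      ih (L c) (ssubset_of_subset_of_ne (hanti hac.le) hLc_ne_a) hc_le_b hLc_ne_b rfl
    exact ⟨μ, ⟨hac.trans hμ.1, hμ.2⟩, hcrit⟩

lemma eq_of_forall_not_isCriticalValue [DecidableEq S] (hp0 : p ∅ = 0)
    (hint : IntegerValued p) (hsup : Supermodular p) (hL : SmallestMaximizerFun p L)
    {a b : ℝ} (hab : a ≤ b) (h : ∀ μ ∈ Set.Ioc a b, ¬ IsCriticalValue p μ) : L a = L b := by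
  by_contra hne
  obtain ⟨μ, hμ, hcrit⟩ := hL.exists_isCriticalValue_of_ne hp0 hint hsup hab hne
  exact h μ hμ hcrit

lemma exists_forall_le_eq_univ [Fintype S] (hp0 : p ∅ = 0) (hfin : p univ ≠ ⊥)
    (hint : IntegerValued p) (hL : SmallestMaximizerFun p L) :
    ∃ μ₀, ∀ μ ≤ μ₀, L μ = univ := by
  obtain ⟨u, hu⟩ := hint.exists_eq_coe hfin
  obtain ⟨M, hM⟩ := Finite.exists_le fun X : Finset S => (p X).toReal
  refine ⟨min (u - M) 0 - 1, fun μ hμ => ?_⟩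
  by_contra hne
  obtain ⟨w, hw⟩ := hint.exists_eq_coe ((hL μ).1.ne_bot_s8 hp0)
  have hwM : w ≤ M := by simpa [hw] using hM (L μ)
  have hcard : ((L μ).card : ℝ) + 1 ≤ Fintype.card S := by
    rw [← card_univ]
    exact_mod_cast card_lt_card (ssubset_univ_iff.2 hne)
  have hmax : u - μ * (univ : Finset S).card ≤ w - μ * (L μ).card := by
    have h := (hL μ).1 univ
    rw [hu, hw] at h
    exact_mod_cast h
  rw [card_univ] at hmax
  nlinarith [min_le_left (u - M) 0, min_le_right (u - M) 0,
    mul_nonneg (by linarith [min_le_right (u - M) 0] : 0 ≤ -μ)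
      (by linarith : (0 : ℝ) ≤ Fintype.card S - (L μ).card - 1)]

end SmallestMaximizerFun

lemma AntitoneOn.exists_forall_lt_iff_le {f : ℕ → ℝ} {r : ℕ} (hf : AntitoneOn f (Set.Icc 1 r))
    (μ : ℝ) : ∃ m ≤ r, ∀ i ∈ Set.Icc 1 r, μ < f i ↔ i ≤ m := by
  classical
  set T := (Finset.Icc 1 r).filter (fun i => μ < f i)
  refine ⟨T.sup id, Finset.sup_le fun i hi => (mem_Icc.1 (mem_filter.1 hi).1).2,
    fun i hi => ⟨fun h => le_sup (f := id) (mem_filter.2 ⟨mem_Icc.2 hi, h⟩), fun h => ?_⟩⟩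
  have hT : T.Nonempty := by
    by_contra hT
    simp only [not_nonempty_iff_eq_empty.1 hT, sup_empty, bot_eq_zero', nonpos_iff_eq_zero] at h
    exact absurd hi.1 (by omega)
  obtain ⟨k, hk, hsup⟩ := T.exists_mem_eq_sup hT id
  obtain ⟨hkr, hk⟩ := mem_filter.1 hk
  exact hk.trans_le (hf hi (mem_Icc.1 hkr) (h.trans hsup.le))

/-- Members `k ≤ r` are `L(λ_k)` and all later ones are `S`, so that `Ŝ_i` is the difference
of the members `i + 1` and `i`. -/
def principalChain [Fintype S] (L : ℝ → Finset S) (lam : ℕ → ℝ) (r k : ℕ) : Finset S :=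
  if k ≤ r then L (lam k) else univ

section PrincipalChain

variable [Fintype S] {L : ℝ → Finset S} {lam : ℕ → ℝ} {r : ℕ}

lemma principalChain_monotoneOn (hL : Antitone L) (hlam : AntitoneOn lam (Set.Icc 1 r)) :
    MonotoneOn (principalChain L lam r) (Set.Ici 1) := by
  intro k hk k' hk' hkk'
  unfold principalChain
  split_ifs with h h'
  · exact hL (hlam ⟨hk, h⟩ ⟨le_trans hk hkk', h'⟩ hkk')
  · exact subset_univ _
  · omega
  · exact le_rfl

lemma eq_principalChain_sdiff [DecidableEq S] {Shat : ℕ → Finset S}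
    (hShat : ∀ i, 1 ≤ i → i < r → Shat i = L (lam (i + 1)) \ L (lam i))
    (hShatr : Shat r = univ \ L (lam r)) {i : ℕ} (hi : i ∈ Set.Icc 1 r) :
    Shat i = principalChain L lam r (i + 1) \ principalChain L lam r i := by
  rcases hi.2.lt_or_eq with h | rfl
  · simp [principalChain, hShat i hi.1 h, h.le, Nat.add_one_le_iff.2 h]
  · simp [principalChain, hShatr]

lemma SmallestMaximizerFun.eq_principalChain [DecidableEq S] {p : Finset S → EReal}
    (hp0 : p ∅ = 0) (hfin : p univ ≠ ⊥) (hsup : Supermodular p) (hint : IntegerValued p)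
    (hL : SmallestMaximizerFun p L) (hlam : AntitoneOn lam (Set.Icc 1 r))
    (hcrit : ∀ μ : ℝ, IsCriticalValue p μ ↔ ∃ i, 1 ≤ i ∧ i ≤ r ∧ lam i = μ) {μ : ℝ} {m : ℕ}
    (hm : ∀ i ∈ Set.Icc 1 r, μ < lam i ↔ i ≤ m) : L μ = principalChain L lam r (m + 1) := by
  unfold principalChain
  split_ifs with hmr
  · have hle : lam (m + 1) ≤ μ := not_lt.1 fun h => by
      have := (hm (m + 1) ⟨by omega, hmr⟩).1 h
      omega
    refine (hL.eq_of_forall_not_isCriticalValue hp0 hint hsup hle ?_).symm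
    rintro _ ⟨hlt, hle⟩ hcr
    obtain ⟨i, hi1, hir, rfl⟩ := (hcrit _).1 hcr
    have hmi : m + 1 ≤ i := by
      by_contra h
      linarith [(hm i ⟨hi1, hir⟩).2 (by omega)]
    linarith [hlam ⟨by omega, hmr⟩ ⟨hi1, hir⟩ hmi]
  · obtain ⟨μ₀, hμ₀⟩ := hL.exists_forall_le_eq_univ hp0 hfin hint
    rw [← hμ₀ (min μ₀ μ) (min_le_left _ _)]
    refine (hL.eq_of_forall_not_isCriticalValue hp0 hint hsup (min_le_right _ _) ?_).symm
    rintro _ ⟨-, hle⟩ hcr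
    obtain ⟨i, hi1, hir, rfl⟩ := (hcrit _).1 hcr
    linarith [(hm i ⟨hi1, hir⟩).2 (by omega)]

end PrincipalChain

lemma biUnion_Ioc_sdiff_eq [DecidableEq S] {D : ℕ → Finset S} {m n : ℕ}
    (hmn : m ≤ n) (hD : MonotoneOn D (Set.Icc (m + 1) (n + 1))) :
    (Ioc m n).biUnion (fun i => D (i + 1) \ D i) = D (n + 1) \ D (m + 1) := by
  induction n, hmn using Nat.le_induction with
  | base => simp
  | succ n hmn ih =>
    rw [← insert_Ioc_right_eq_Ioc_add_one hmn, biUnion_insert,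
      ih (hD.mono (Set.Icc_subset_Icc le_rfl (by omega)))]
    exact sdiff_union_sdiff_cancel (hD ⟨by omega, by omega⟩ ⟨by omega, le_rfl⟩ (by omega))
      (hD ⟨le_rfl, by omega⟩ ⟨by omega, by omega⟩ (by omega))

lemma filter_ceil_eq_Ioc {lam : ℕ → ℝ} {r m₀ m₁ : ℕ} {b : ℤ}
    (hm₀ : ∀ i ∈ Set.Icc 1 r, (b : ℝ) < lam i ↔ i ≤ m₀)
    (hm₁ : ∀ i ∈ Set.Icc 1 r, (b : ℝ) - 1 < lam i ↔ i ≤ m₁) (hm₁r : m₁ ≤ r) :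
    (Icc 1 r).filter (fun i => ⌈lam i⌉ = b) = Ioc m₀ m₁ := by
  ext i
  simp only [mem_filter, mem_Icc, mem_Ioc, Int.ceil_eq_iff]
  constructor
  · rintro ⟨hi, hlo, hhi⟩
    refine ⟨Nat.lt_of_not_le fun h => ?_, (hm₁ i hi).1 hlo⟩
    linarith [(hm₀ i hi).2 h]
  · rintro ⟨h₀, h₁⟩
    have hi : 1 ≤ i ∧ i ≤ r := ⟨by omega, by omega⟩
    refine ⟨hi, (hm₁ i hi).2 h₁, not_lt.1 fun h => ?_⟩
    have := (hm₀ i hi).1 h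
    omega

theorem canonical_partition_aggregates_principal_general (p : Finset α → EReal) (hp0 : p ∅ = 0)
    (hfin : p (Finset.univ : Finset α) ≠ ⊥) (hsup : Supermodular p)
    (hint : IntegerValued p) (L : ℝ → Finset α) (hL : SmallestMaximizerFun p L)
    (r q : ℕ) (lam : ℕ → ℝ) (β : ℕ → ℤ)
    (hlamdec : ∀ i, 1 ≤ i → i < r → lam (i + 1) < lam i)
    (hcrit : ∀ μ : ℝ, IsCriticalValue p μ ↔ ∃ i, 1 ≤ i ∧ i ≤ r ∧ lam i = μ)
    (hess : ∀ b : ℤ, L (b : ℝ) ≠ L ((b : ℝ) - 1) ↔ ∃ j, 1 ≤ j ∧ j ≤ q ∧ β j = b)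
    (Shat : ℕ → Finset α)
    (hShat : ∀ i, 1 ≤ i → i < r → Shat i = L (lam (i + 1)) \ L (lam i))
    (hShatr : Shat r = Finset.univ \ L (lam r)) :
    ∀ j, 1 ≤ j → j ≤ q →
      (L ((β j : ℝ) - 1) \ L ((β j : ℝ)) =
        ((Finset.Icc 1 r).filter (fun i => ⌈lam i⌉ = β j)).biUnion Shat) ∧
      ∃ i, 1 ≤ i ∧ i ≤ r ∧ ⌈lam i⌉ = β j ∧
        L ((β j : ℝ) - 1) = (if i < r then L (lam (i + 1)) else Finset.univ) := by
  intro j hj hjq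
  have hlam : AntitoneOn lam (Set.Icc 1 r) :=
    antitoneOn_of_add_one_le Set.ordConnected_Icc fun i _ hi hi' => (hlamdec i hi.1 hi'.2).le
  obtain ⟨m₀, hm₀r, hm₀⟩ := hlam.exists_forall_lt_iff_le (β j : ℝ)
  obtain ⟨m₁, hm₁r, hm₁⟩ := hlam.exists_forall_lt_iff_le ((β j : ℝ) - 1)
  have hL₀ := hL.eq_principalChain hp0 hfin hsup hint hlam hcrit hm₀
  have hL₁ := hL.eq_principalChain hp0 hfin hsup hint hlam hcrit hm₁
  have hm₀₁ : m₀ < m₁ := by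
    refine lt_of_le_of_ne ?_ fun h => (hess _).2 ⟨j, hj, hjq, rfl⟩ (by rw [hL₀, hL₁, h])
    rcases Nat.eq_zero_or_pos m₀ with h | h
    · omega
    · exact (hm₁ m₀ ⟨h, hm₀r⟩).1 (by linarith [(hm₀ m₀ ⟨h, hm₀r⟩).2 le_rfl])
  have hT := filter_ceil_eq_Ioc hm₀ hm₁ hm₁r
  have hm₁T : m₁ ∈ (Finset.Icc 1 r).filter (fun i => ⌈lam i⌉ = β j) := by
    rw [hT]
    exact mem_Ioc.2 ⟨hm₀₁, le_rfl⟩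
  refine ⟨?_, m₁, by omega, hm₁r, (mem_filter.1 hm₁T).2, ?_⟩
  · have hmono : MonotoneOn (principalChain L lam r) (Set.Icc (m₀ + 1) (m₁ + 1)) :=
      (principalChain_monotoneOn (hL.antitone hp0 hint hsup) hlam).mono
        ((Set.Icc_subset_Ici_iff (by omega)).2 (by omega))
    rw [hT, biUnion_congr rfl fun i hi => eq_principalChain_sdiff hShat hShatr
      ⟨by have := (mem_Ioc.1 hi).1; omega, (mem_Ioc.1 hi).2.trans hm₁r⟩,
      biUnion_Ioc_sdiff_eq hm₀₁.le hmono, hL₀, hL₁]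
  · rw [hL₁, principalChain]
    simp only [Nat.add_one_le_iff]

/-- Relation between canonical and principal partitions: each member
`S_j = L(β_j − 1) \ L(β_j)` of the canonical partition is the union of the members
`Ŝ_i = L(λ_{i+1}) \ L(λ_i)` (with `L(λ_{r+1}) := S`) of the principal partition
whose critical value satisfies `⌈λ_i⌉ = β_j`; and each canonical chain member
`L(β_j − 1)` equals some principal chain member `Ĉ_i = L(λ_{i+1})` (or `S` for `i = r`). -/
theorem canonical_partition_aggregates_principal (p : Finset α → EReal) (hp0 : p ∅ = 0)
    (hfin : p (Finset.univ : Finset α) ≠ ⊥) (hsup : Supermodular p)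
    (hint : IntegerValued p) (L : ℝ → Finset α) (hL : SmallestMaximizerFun p L)
    (r q : ℕ) (hr : 1 ≤ r) (hq : 1 ≤ q) (lam : ℕ → ℝ) (β : ℕ → ℤ)
    (hlamdec : ∀ i, 1 ≤ i → i < r → lam (i + 1) < lam i)
    (hβdec : ∀ j, 1 ≤ j → j < q → β (j + 1) < β j)
    (hcrit : ∀ μ : ℝ, IsCriticalValue p μ ↔ ∃ i, 1 ≤ i ∧ i ≤ r ∧ lam i = μ)
    (hess : ∀ b : ℤ, L (b : ℝ) ≠ L ((b : ℝ) - 1) ↔ ∃ j, 1 ≤ j ∧ j ≤ q ∧ β j = b)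
    (Shat : ℕ → Finset α)
    (hShat : ∀ i, 1 ≤ i → i < r → Shat i = L (lam (i + 1)) \ L (lam i))
    (hShatr : Shat r = Finset.univ \ L (lam r)) :
    ∀ j, 1 ≤ j → j ≤ q →
      (L ((β j : ℝ) - 1) \ L ((β j : ℝ)) =
        ((Finset.Icc 1 r).filter (fun i => ⌈lam i⌉ = β j)).biUnion Shat) ∧
      ∃ i, 1 ≤ i ∧ i ≤ r ∧ ⌈lam i⌉ = β j ∧
        L ((β j : ℝ) - 1) = (if i < r then L (lam (i + 1)) else Finset.univ) :=
  canonical_partition_aggregates_principal_general p hp0 hfin hsup hint L hL r q lam β hlamdec hcrit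
    hess Shat hShat hShatr
end

section
/- Let B = B'(p) be a base-polyhedron defined by a real-valued supermodular function p, and let m ∈ B have distinct component values λ'₁ > λ'₂ > ⋯ > λ'_ℓ. Then m is the unique decreasingly minimal element of B if and only if each level set Ĉ_i := {s ∈ S : m(s) ≥ λ'_i} is m-tight, i.e., Σ_{s∈Ĉ_i} m(s) = p(Ĉ_i), for i = 1, …, ℓ. -/
open Finset

variable {α : Type*} [Fintype α] [DecidableEq α]

/-- `x` belongs to the base-polyhedron `B'(p)`:
`x(S) = p(S)` and `x(Z) ≥ p(Z)` for every `Z ⊆ S`. -/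
def memB (p : Finset α → EReal) (x : α → ℝ) : Prop :=
  ((∑ s, x s : ℝ) : EReal) = p Finset.univ ∧
    ∀ Z : Finset α, p Z ≤ ((∑ s ∈ Z, x s : ℝ) : EReal)

/-- `x` is an integral element of the base-polyhedron `B'(p)` (a member of the
M-convex set `B ∩ ℤ^S`). -/
def memBZ (p : Finset α → EReal) (x : α → ℤ) : Prop :=
  ((((∑ s, x s : ℤ) : ℝ)) : EReal) = p Finset.univ ∧
    ∀ Z : Finset α, p Z ≤ ((((∑ s ∈ Z, x s : ℤ) : ℝ)) : EReal)

/-- Lexicographic comparison `l1 ≤_lex l2` of lists. -/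
def lexLE {β : Type*} [LT β] (l1 l2 : List β) : Prop :=
  l1 = l2 ∨ List.Lex (· < ·) l1 l2

/-- The components of `x` sorted in decreasing order. -/
noncomputable def sortDescR (x : α → ℝ) : List ℝ :=
  (Multiset.sort (Finset.univ.val.map x) (· ≤ ·)).reverse

/-- The components of the integral vector `x` sorted in decreasing order. -/
def sortDescZ (x : α → ℤ) : List ℤ :=
  (Multiset.sort (Finset.univ.val.map x) (· ≤ ·)).reverse

/-- `m` is a decreasingly minimal element of the base-polyhedron `B'(p)`. -/
def DecMinR (p : Finset α → EReal) (m : α → ℝ) : Prop :=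
  memB p m ∧ ∀ y : α → ℝ, memB p y → lexLE (sortDescR m) (sortDescR y)

/-- `m` is a decreasingly minimal element of the M-convex set `B'(p) ∩ ℤ^S`. -/
def DecMinZ (p : Finset α → EReal) (m : α → ℤ) : Prop :=
  memBZ p m ∧ ∀ y : α → ℤ, memBZ p y → lexLE (sortDescZ m) (sortDescZ y)

/-!
Decreasingly sorted vectors are compared at a threshold: `sortDescR x < sortDescR y` iff for some
value `v` the entries above `v` agree as multisets and `x` has fewer entries equal to `v`.

If `m` is dec-min and `m t < m s`, some `m`-tight set contains `s` but not `t`: otherwise moving a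
small `ε` from `s` to `t` stays in `B` and lowers the sorted vector at the threshold `m s`. Tight
sets form a lattice by supermodularity, and every level set `{v ≤ m}` is a union of intersections of
such separating sets.

Conversely, let the level set `C = {v ≤ m}` be tight and let `y ∈ B` agree with `m` above `v`. Then
`∑_C (y - v) ≥ ∑_C (m - v) = ∑ (m - v)⁺ = ∑ (y - v)⁺ ≥ ∑_C (y - v)⁺`, which forces `v ≤ y` on `C`.
At a threshold witnessing `sortDescR y < sortDescR m` this contradicts counting; if `y` and `m`
have the same sorted entries it gives `m ≤ y` pointwise, hence `y = m` since `y(S) = m(S)`.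
-/

namespace List
variable {β : Type*} [LinearOrder β]

theorem le_head_of_mem {y z : β} {b : List β} (hb : (y :: b).Pairwise (· ≥ ·))
    (hz : z ∈ y :: b) : z ≤ y := by
  rcases mem_cons.mp hz with rfl | hz
  · exact le_rfl
  · exact (pairwise_cons.mp hb).1 z hz

theorem filter_lt_eq_nil_of_head_le {v y : β} {b : List β} (hb : (y :: b).Pairwise (· ≥ ·))
    (hyv : y ≤ v) : (y :: b).filter (v < ·) = [] :=
  filter_eq_nil_iff.mpr fun z hz => by simpa using (le_head_of_mem hb hz).trans hyv

theorem exists_filter_eq_count_lt_of_lt {a b : List β} (ha : a.Pairwise (· ≥ ·))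
    (hb : b.Pairwise (· ≥ ·)) (h : a < b) :
    ∃ v, a.filter (v < ·) = b.filter (v < ·) ∧ a.count v < b.count v := by
  induction h with
  | @nil y b => exact ⟨y, (filter_lt_eq_nil_of_head_le hb le_rfl).symm, by simp⟩
  | @rel x a y b hxy =>
    have hay : ∀ z ∈ x :: a, z < y := fun z hz => (le_head_of_mem ha hz).trans_lt hxy
    refine ⟨y, ?_, ?_⟩
    · rw [filter_lt_eq_nil_of_head_le hb le_rfl, filter_lt_eq_nil_of_head_le ha hxy.le]
    · simp [count_eq_zero_of_not_mem fun hy => lt_irrefl y (hay y hy)]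
  | @cons c a b _ ih =>
    obtain ⟨v, hfilter, hcount⟩ := ih ha.of_cons hb.of_cons
    refine ⟨v, ?_, ?_⟩
    · by_cases hv : v < c <;> simp [hv, hfilter]
    · simp only [count_cons]; omega

theorem lt_of_filter_eq_of_count_lt {a b : List β} (ha : a.Pairwise (· ≥ ·))
    (hb : b.Pairwise (· ≥ ·)) {v : β} (hfilter : a.filter (v < ·) = b.filter (v < ·))
    (hcount : a.count v < b.count v) : a < b := by
  induction a generalizing b with
  | nil =>
    cases b with
    | nil => simp at hcount
    | cons => exact Lex.nil
  | cons x a ih =>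
    cases b with
    | nil => simp at hcount
    | cons y b =>
      rcases lt_or_ge v x with hvx | hxv <;> rcases lt_or_ge v y with hvy | hyv
      · obtain ⟨rfl, hf⟩ : x = y ∧ a.filter (v < ·) = b.filter (v < ·) := by
          simpa [hvx, hvy] using hfilter
        exact Lex.cons (ih ha.of_cons hb.of_cons hf (by simpa [count_cons] using hcount))
      · simp [hvx, filter_lt_eq_nil_of_head_le hb hyv] at hfilter
      · simp [hvy, filter_lt_eq_nil_of_head_le ha hxv] at hfilter
      · obtain rfl : y = v := hyv.antisymm (le_head_of_mem hb (count_pos_iff.mp (by omega)))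
        rcases hxv.lt_or_eq with hxy | rfl
        · exact Lex.rel hxy
        · exact Lex.cons <| ih ha.of_cons hb.of_cons (by simpa using hfilter)
            (by simpa [count_cons] using hcount)

theorem lt_iff_exists_filter_eq_count_lt {a b : List β} (ha : a.Pairwise (· ≥ ·))
    (hb : b.Pairwise (· ≥ ·)) :
    a < b ↔ ∃ v, a.filter (v < ·) = b.filter (v < ·) ∧ a.count v < b.count v :=
  ⟨exists_filter_eq_count_lt_of_lt ha hb,
    fun ⟨_, hf, hc⟩ => lt_of_filter_eq_of_count_lt ha hb hf hc⟩

end List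

open Filter Topology

theorem lexLE_iff_le {β : Type*} [LinearOrder β] {u v : List β} : lexLE u v ↔ u ≤ v := by
  rw [lexLE, le_iff_eq_or_lt]
  rfl

theorem EReal.eq_coe_of_le_of_coe_add_le {a b : EReal} {a' b' : ℝ} (ha : a ≤ a') (hb : b ≤ b')
    (h : ((a' + b' : ℝ) : EReal) ≤ a + b) : a = a' := by
  have hb' : b ≠ ⊥ := by rintro rfl; simp at h
  have ha' : a ≠ ⊥ := by rintro rfl; simp at h
  obtain ⟨r, rfl⟩ : ∃ r : ℝ, a = r :=
    ⟨a.toReal, (EReal.coe_toReal (ha.trans_lt (EReal.coe_lt_top _)).ne ha').symm⟩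
  obtain ⟨r', rfl⟩ : ∃ r' : ℝ, b = r' :=
    ⟨b.toReal, (EReal.coe_toReal (hb.trans_lt (EReal.coe_lt_top _)).ne hb').symm⟩
  norm_cast at ha hb h ⊢
  linarith

section

variable {ι : Type*} [Fintype ι]

theorem pairwise_sortDescR (x : ι → ℝ) : (sortDescR x).Pairwise (· ≥ ·) := by
  rw [sortDescR, List.pairwise_reverse]
  exact Multiset.pairwise_sort _ _

theorem coe_sortDescR (x : ι → ℝ) : (sortDescR x : Multiset ℝ) = univ.val.map x := by
  rw [sortDescR, Multiset.coe_reverse, Multiset.sort_eq]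

theorem sortDescR_lt_iff (x y : ι → ℝ) :
    sortDescR x < sortDescR y ↔ ∃ v, (univ.val.map x).filter (v < ·) =
      (univ.val.map y).filter (v < ·) ∧ (univ.val.map x).count v < (univ.val.map y).count v := by
  rw [List.lt_iff_exists_filter_eq_count_lt (pairwise_sortDescR x) (pairwise_sortDescR y)]
  refine exists_congr fun v => and_congr ?_ ?_
  · rw [← coe_sortDescR, ← coe_sortDescR, Multiset.filter_coe, Multiset.filter_coe,
      Multiset.coe_eq_coe]
    exact ⟨List.Perm.of_eq, List.Perm.eq_of_pairwise' ((pairwise_sortDescR x).filter _)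
      ((pairwise_sortDescR y).filter _)⟩
  · rw [← coe_sortDescR, ← coe_sortDescR, Multiset.coe_count, Multiset.coe_count]

theorem card_filter_le_eq (x : ι → ℝ) (v : ℝ) :
    #(univ.filter (v ≤ x ·)) =
      Multiset.card ((univ.val.map x).filter (v < ·)) + (univ.val.map x).count v := by
  rw [Multiset.filter_map, Multiset.card_map, Multiset.count_map, ← filter_val, ← filter_val,
    ← card_filter_add_card_filter_not (p := (v < x ·)), filter_filter, filter_filter]
  congr 2 <;> ext u <;> simp only [mem_filter, mem_univ, true_and, Function.comp_apply] <;> grind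

theorem sum_posPart_sub_eq (x : ι → ℝ) (v : ℝ) :
    ∑ u, (x u - v)⁺ = (((univ.val.map x).filter (v < ·)).map (· - v)).sum := by
  rw [Multiset.filter_map, Multiset.map_map, ← filter_val, ← sum_eq_multiset_sum, sum_filter]
  refine sum_congr rfl fun u _ => ?_
  split_ifs with h
  · exact posPart_of_nonneg (sub_nonneg.2 h.le)
  · exact posPart_of_nonpos (sub_nonpos.2 (not_lt.1 h))

theorem sum_filter_le_sub_eq_sum_posPart (x : ι → ℝ) (v : ℝ) :
    ∑ u ∈ univ.filter (v ≤ x ·), (x u - v) = ∑ u, (x u - v)⁺ := by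
  rw [sum_filter]
  refine sum_congr rfl fun u _ => ?_
  split_ifs with h
  · exact (posPart_of_nonneg (sub_nonneg.2 h)).symm
  · exact (posPart_of_nonpos (sub_nonpos.2 (not_le.1 h).le)).symm

theorem sortDescR_lt_of_agree_above {x y : ι → ℝ} {v : ℝ}
    (hagree : ∀ u, v < x u ∨ v < y u → x u = y u)
    (hlevel : univ.filter (x · = v) ⊂ univ.filter (y · = v)) : sortDescR x < sortDescR y := by
  rw [sortDescR_lt_iff]
  refine ⟨v, ?_, ?_⟩
  · have hfilter : univ.val.filter ((v < ·) ∘ x) = univ.val.filter ((v < ·) ∘ y) :=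
      Multiset.filter_congr fun u _ => by
        simp only [Function.comp_apply]
        exact ⟨fun h => hagree u (.inl h) ▸ h, fun h => (hagree u (.inr h)).symm ▸ h⟩
    rw [Multiset.filter_map, Multiset.filter_map, hfilter]
    exact Multiset.map_congr rfl fun u hu => hagree u (.inr (Multiset.mem_filter.1 hu).2)
  · rw [Multiset.count_map, Multiset.count_map, ← filter_val, ← filter_val, ← card_def,
      ← card_def]
    simpa only [eq_comm] using card_lt_card hlevel

def IsTight (p : Finset ι → EReal) (x : ι → ℝ) (Z : Finset ι) : Prop :=
  ((∑ s ∈ Z, x s : ℝ) : EReal) = p Z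

variable {p : Finset ι → EReal} {m y : ι → ℝ}

theorem filter_le_subset_of_isTight (hy : memB p y) {v : ℝ}
    (hC : IsTight p m (univ.filter (v ≤ m ·)))
    (hfilter : (univ.val.map y).filter (v < ·) = (univ.val.map m).filter (v < ·)) :
    univ.filter (v ≤ m ·) ⊆ univ.filter (v ≤ y ·) := by
  intro s hs
  by_contra hys
  simp only [mem_filter, mem_univ, true_and, not_le] at hs hys
  set C := univ.filter (v ≤ m ·)
  have hslack : ∑ u ∈ C, (y u - v) < ∑ u, (y u - v)⁺ := calc
    ∑ u ∈ C, (y u - v) < ∑ u ∈ C, (y u - v)⁺ :=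
      sum_lt_sum (fun u _ => le_posPart _)
        ⟨s, by simpa [C] using hs, (sub_neg.2 hys).trans_le (posPart_nonneg _)⟩
    _ ≤ ∑ u, (y u - v)⁺ :=
      sum_le_sum_of_subset_of_nonneg (subset_univ _) fun _ _ _ => posPart_nonneg _
  have hexcess : ∑ u, (y u - v)⁺ = ∑ u ∈ C, (m u - v) := by
    rw [sum_posPart_sub_eq, hfilter, ← sum_posPart_sub_eq, sum_filter_le_sub_eq_sum_posPart]
  have hle : ∑ u ∈ C, m u ≤ ∑ u ∈ C, y u := EReal.coe_le_coe_iff.1 (hC.trans_le (hy.2 C))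
  simp only [sum_sub_distrib] at hslack hexcess
  linarith

theorem not_sortDescR_lt_of_isTight (hy : memB p y)
    (hlevel : ∀ s, IsTight p m (univ.filter (m s ≤ m ·))) : ¬ sortDescR y < sortDescR m := by
  rw [sortDescR_lt_iff]
  rintro ⟨v, hfilter, hcount⟩
  obtain ⟨s, -, rfl⟩ :=
    Multiset.mem_map.1 (Multiset.count_pos.1 (hcount.trans_le' (Nat.zero_le _)))
  have hcard := card_le_card (filter_le_subset_of_isTight hy (hlevel s) hfilter)
  rw [card_filter_le_eq, card_filter_le_eq, hfilter] at hcard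
  omega

theorem eq_of_sortDescR_eq (hm : memB p m) (hy : memB p y)
    (hlevel : ∀ s, IsTight p m (univ.filter (m s ≤ m ·))) (hsort : sortDescR y = sortDescR m) :
    y = m := by
  have hvalues : univ.val.map y = univ.val.map m := by
    rw [← coe_sortDescR, hsort, coe_sortDescR]
  have hge : ∀ s, m s ≤ y s := fun s => by
    simpa using filter_le_subset_of_isTight hy (hlevel s) (by rw [hvalues])
      (mem_filter.2 ⟨mem_univ s, le_rfl⟩)
  have hsum : ∑ s, m s = ∑ s, y s := EReal.coe_injective (hm.1.trans hy.1.symm)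
  funext s
  exact ((sum_eq_sum_iff_of_le fun s _ => hge s).1 hsum s (mem_univ s)).symm

theorem eventually_le_coe_sum_sub {P : Finset ι → Prop}
    (h : ∀ Z, P Z → p Z < ((∑ u ∈ Z, m u : ℝ) : EReal)) :
    ∀ᶠ ε in 𝓝 (0 : ℝ), ∀ Z, P Z → p Z ≤ ((∑ u ∈ Z, m u - ε : ℝ) : EReal) := by
  refine eventually_all.2 fun Z => ?_
  by_cases hZ : P Z
  · obtain ⟨r, hpr, hr⟩ := EReal.lt_iff_exists_real_btwn.1 (h Z hZ)
    filter_upwards [eventually_lt_nhds (sub_pos.2 (EReal.coe_lt_coe_iff.1 hr))] with ε hε _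
    exact hpr.le.trans (EReal.coe_le_coe_iff.2 (by linarith))
  · exact Eventually.of_forall fun _ hZ' => (hZ hZ').elim

variable [DecidableEq ι]

theorem IsTight.inter_union (hsup : Supermodular p) (hm : memB p m) {X Y : Finset ι}
    (hX : IsTight p m X) (hY : IsTight p m Y) : IsTight p m (X ∩ Y) ∧ IsTight p m (X ∪ Y) := by
  have key : ((∑ s ∈ X ∩ Y, m s + ∑ s ∈ X ∪ Y, m s : ℝ) : EReal) ≤ p (X ∩ Y) + p (X ∪ Y) := by
    rw [add_comm, sum_union_inter, EReal.coe_add, hX, hY]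
    exact hsup X Y
  refine ⟨(EReal.eq_coe_of_le_of_coe_add_le (hm.2 _) (hm.2 _) key).symm,
    (EReal.eq_coe_of_le_of_coe_add_le (hm.2 (X ∪ Y)) (hm.2 (X ∩ Y)) ?_).symm⟩
  rwa [add_comm, add_comm (p _)]

theorem isTight_filter_le_of_separating (hp0 : p ∅ = 0) (hsup : Supermodular p) (hm : memB p m)
    (hsep : ∀ s t, m t < m s → ∃ Z, IsTight p m Z ∧ s ∈ Z ∧ t ∉ Z) (v : ℝ) :
    IsTight p m (univ.filter (v ≤ m ·)) := by
  set C := univ.filter (v ≤ m ·)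
  have hsep' : ∀ s t, ∃ Z, IsTight p m Z ∧ (m t < m s → s ∈ Z ∧ t ∉ Z) := fun s t => by
    by_cases hts : m t < m s
    · obtain ⟨Z, hZ, hsZ, htZ⟩ := hsep s t hts
      exact ⟨Z, hZ, fun _ => ⟨hsZ, htZ⟩⟩
    · exact ⟨univ, hm.1, fun h => (hts h).elim⟩
  choose Z hZ hsepZ using hsep'
  have hC : C = C.sup fun s => Cᶜ.inf (Z s) := by
    ext u
    simp only [C, Finset.mem_sup, Finset.mem_inf, mem_filter, mem_univ, true_and, mem_compl,
      not_le]
    refine ⟨fun hu => ⟨u, hu, fun t ht => (hsepZ u t (ht.trans_le hu)).1⟩, ?_⟩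
    rintro ⟨s, hs, hu⟩
    by_contra! hu'
    exact (hsepZ s u (hu'.trans_le hs)).2 (hu u hu')
  rw [hC]
  refine sup_induction (by simp [IsTight, hp0]) (fun X hX Y hY => (hX.inter_union hsup hm hY).2)
    fun s _ => inf_induction (by rw [top_eq_univ]; exact hm.1)
      (fun X hX Y hY => (hX.inter_union hsup hm hY).1) fun t _ => hZ s t

theorem memB_add_single_sub_single (hm : memB p m) {s t : ι} {ε : ℝ} (hε : 0 ≤ ε)
    (hslack : ∀ Z, s ∈ Z → t ∉ Z → p Z ≤ ((∑ u ∈ Z, m u - ε : ℝ) : EReal)) :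
    memB p (m + Pi.single t ε - Pi.single s ε) := by
  have hsum : ∀ Z : Finset ι, ∑ u ∈ Z, (m + Pi.single t ε - Pi.single s ε : ι → ℝ) u =
      ∑ u ∈ Z, m u + (if t ∈ Z then ε else 0) - (if s ∈ Z then ε else 0) := fun Z => by
    simp [sum_add_distrib, sum_sub_distrib, sum_pi_single']
  refine ⟨by rw [hsum]; simpa using hm.1, fun Z => ?_⟩
  rw [hsum]
  by_cases hs : s ∈ Z <;> by_cases ht : t ∈ Z <;> simp only [hs, ht, if_true, if_false]
  · simpa using hm.2 Z
  · simpa using hslack Z hs ht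
  · exact (hm.2 Z).trans (EReal.coe_le_coe_iff.2 (by linarith))
  · simpa using hm.2 Z

theorem exists_isTight_mem_not_mem (hm : memB p m)
    (hmin : ∀ y, memB p y → sortDescR m ≤ sortDescR y) {s t : ι} (hts : m t < m s) :
    ∃ Z, IsTight p m Z ∧ s ∈ Z ∧ t ∉ Z := by
  by_contra! hno
  have hslack : ∀ Z, s ∈ Z ∧ t ∉ Z → p Z < ((∑ u ∈ Z, m u : ℝ) : EReal) := fun Z hZ =>
    (hm.2 Z).lt_of_ne fun h => hZ.2 (hno Z h.symm hZ.1)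
  obtain ⟨ε, ⟨hεst, hεZ⟩, hε0 : 0 < ε⟩ :=
    ((((eventually_lt_nhds (half_pos (sub_pos.2 hts))).and
      (eventually_le_coe_sum_sub hslack)).filter_mono nhdsWithin_le_nhds).and
        self_mem_nhdsWithin).exists (f := 𝓝[>] 0)
  set y := m + Pi.single t ε - Pi.single s ε
  have hst : s ≠ t := fun h => hts.ne (h ▸ rfl)
  have hmoved : ∀ u, u = s ∨ u = t → y u < m s ∧ m u ≤ m s := by
    rintro u (rfl | rfl)
    · exact ⟨by simp [y, hst, hε0], le_rfl⟩
    · exact ⟨by simp [y, hst.symm]; linarith, hts.le⟩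
  have hfixed : ∀ u, ¬(u = s ∨ u = t) → y u = m u := fun u h => by
    simp [y, (not_or.1 h).1, (not_or.1 h).2]
  refine not_lt_of_ge (hmin y (memB_add_single_sub_single hm hε0.le fun Z hs ht => hεZ Z ⟨hs, ht⟩))
    (sortDescR_lt_of_agree_above (v := m s) (fun u hu => ?_) ?_)
  · by_cases h : u = s ∨ u = t
    · obtain ⟨h1, h2⟩ := hmoved u h
      rcases hu with hu | hu <;> linarith
    · exact hfixed u h
  · refine ssubset_of_subset_of_ne (fun u hu => ?_) fun h => ?_
    · simp only [mem_filter, mem_univ, true_and] at hu ⊢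
      by_cases h : u = s ∨ u = t
      · exact absurd hu (hmoved u h).1.ne
      · rwa [← hfixed u h]
    · have : s ∈ univ.filter (y · = m s) := h ▸ by simp
      exact (hmoved s (.inl rfl)).1.ne (by simpa using this)

end

theorem decmin_iff_level_sets_tight_general (p : Finset α → EReal) (hp0 : p ∅ = 0) (hsup : Supermodular p)
    (m : α → ℝ) (hm : memB p m) (ℓ : ℕ) (lam : ℕ → ℝ)
    (hvals : ∀ s : α, ∃ i, 1 ≤ i ∧ i ≤ ℓ ∧ m s = lam i) :
    (DecMinR p m ∧ ∀ m' : α → ℝ, DecMinR p m' → m' = m) ↔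
      (∀ i, 1 ≤ i → i ≤ ℓ →
        ((∑ s ∈ Finset.univ.filter (fun s => lam i ≤ m s), m s : ℝ) : EReal) =
          p (Finset.univ.filter (fun s => lam i ≤ m s))) := by
  constructor
  · rintro ⟨⟨-, hmin⟩, -⟩ i - -
    refine isTight_filter_le_of_separating hp0 hsup hm (fun s t hts => ?_) (lam i)
    exact exists_isTight_mem_not_mem hm (fun y hy => lexLE_iff_le.1 (hmin y hy)) hts
  · intro htight
    have hlevel : ∀ s, IsTight p m (univ.filter (m s ≤ m ·)) := fun s => by
      obtain ⟨i, hi1, hiℓ, hi⟩ := hvals s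
      rw [hi]
      exact htight i hi1 hiℓ
    have hmin : ∀ y, memB p y → sortDescR m ≤ sortDescR y := fun y hy =>
      not_lt.1 (not_sortDescR_lt_of_isTight hy hlevel)
    refine ⟨⟨hm, fun y hy => lexLE_iff_le.2 (hmin y hy)⟩, fun m' hm' => ?_⟩
    exact eq_of_sortDescR_eq hm hm'.1 hlevel
      (le_antisymm (lexLE_iff_le.1 (hm'.2 m hm)) (hmin m' hm'.1))

/-- An element `m ∈ B'(p)` with distinct component values `λ'₁ > ⋯ > λ'_ℓ` is the
unique dec-min element of `B` iff each level set `Ĉ_i = {s : m(s) ≥ λ'_i}` is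
`m`-tight. -/
theorem decmin_iff_level_sets_tight (p : Finset α → EReal) (hp0 : p ∅ = 0)
    (hfin : p (Finset.univ : Finset α) ≠ ⊥) (hsup : Supermodular p)
    (m : α → ℝ) (hm : memB p m) (ℓ : ℕ) (hℓ : 1 ≤ ℓ) (lam : ℕ → ℝ)
    (hdec : ∀ i, 1 ≤ i → i < ℓ → lam (i + 1) < lam i)
    (hvals : ∀ s : α, ∃ i, 1 ≤ i ∧ i ≤ ℓ ∧ m s = lam i)
    (hattain : ∀ i, 1 ≤ i → i ≤ ℓ → ∃ s : α, m s = lam i) :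
    (DecMinR p m ∧ ∀ m' : α → ℝ, DecMinR p m' → m' = m) ↔
      (∀ i, 1 ≤ i → i ≤ ℓ →
        ((∑ s ∈ Finset.univ.filter (fun s => lam i ≤ m s), m s : ℝ) : EReal) =
          p (Finset.univ.filter (fun s => lam i ≤ m s))) :=
  decmin_iff_level_sets_tight_general p hp0 hsup m hm ℓ lam hvals
end
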